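/- arXiv:2006.13793 — 2 statements merged into one kernel-verified Lean document; each statement's English description precedes it below -/
import Mathlib

section
/- Let V and W be bars of Ã_ℝ, say V ≅ M_I and W ≅ M_J for bounded intervals I, J ⊂ ℝ. Then V is isomorphic to W if and only if there exists an integer n such that the map x ↦ x + 2nπ is a bijection from I onto J. -/
open Set

noncomputable section

/-- A continuous quiver of type Ã: the data of the (even) set `S` of sinks/sources
on the circle, described via the cardinality `2*m`-ish data `m` and the angles `α`.
When `m = 0` we are in the cyclic case and fix `α j = π j`. -/
structure AtR where
  m : ℕ
  α : ℤ → ℝ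
  mono : StrictMono α
  cyc : m = 0 → ∀ j : ℤ, α j = Real.pi * j
  per : m ≠ 0 → ∀ j : ℤ, α (j + 2 * m) = α j + 2 * Real.pi
  base0 : 0 ≤ α 0
  base1 : α 0 < 2 * Real.pi

namespace AtR

variable (Q : AtR)

/-- `covRel θ φ` holds iff there is a morphism `e^{iθ} → e^{iφ}` in the continuous
quiver of type Ã, presented on the universal cover `ℝ` of the circle.
In the cyclic case (`m = 0`) morphisms go counterclockwise, i.e. `θ ≤ φ`;
otherwise a morphism stays within one (lifted) arc `[α j, α (j+1)]` and goes
down on even arcs (towards the sink `α j`) and up on odd arcs. -/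
def covRel (θ φ : ℝ) : Prop :=
  if Q.m = 0 then θ ≤ φ
  else ∃ j : ℤ, θ ∈ Set.Icc (Q.α j) (Q.α (j + 1)) ∧ φ ∈ Set.Icc (Q.α j) (Q.α (j + 1)) ∧
    ((Even j ∧ φ ≤ θ) ∨ (¬ Even j ∧ θ ≤ φ))

variable {Q}

lemma arcs_overlap {j j' : ℤ} {x : ℝ}
    (hj : x ∈ Set.Icc (Q.α j) (Q.α (j + 1))) (hj' : x ∈ Set.Icc (Q.α j') (Q.α (j' + 1)))
    (hne : j ≠ j') :
    (j' = j + 1 ∧ x = Q.α (j + 1)) ∨ (j = j' + 1 ∧ x = Q.α j) := by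
  rcases lt_or_gt_of_ne hne with h | h
  · left
    have h1 : j + 1 ≤ j' := by omega
    have h2 : Q.α (j + 1) ≤ Q.α j' := Q.mono.monotone h1
    have hx : x = Q.α (j + 1) := le_antisymm hj.2 (le_trans h2 hj'.1)
    have hx2 : Q.α (j + 1) = Q.α j' := le_antisymm h2 (hx ▸ hj'.1)
    exact ⟨(Q.mono.injective hx2).symm, hx⟩
  · right
    have h1 : j' + 1 ≤ j := by omega
    have h2 : Q.α (j' + 1) ≤ Q.α j := Q.mono.monotone h1
    have hx : x = Q.α (j' + 1) := le_antisymm hj'.2 (le_trans h2 hj.1)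
    have hx2 : Q.α (j' + 1) = Q.α j := le_antisymm h2 (hx ▸ hj.1)
    exact ⟨Q.mono.injective hx2.symm, hx.trans hx2⟩

/-- Key lemma: if there are morphisms `θ → φ` and `φ → ψ` then `φ` lies in the
convex hull of `{θ, ψ}`. -/
lemma covRel_hull {θ φ ψ : ℝ} (h1 : Q.covRel θ φ) (h2 : Q.covRel φ ψ) :
    min θ ψ ≤ φ ∧ φ ≤ max θ ψ := by
  unfold covRel at h1 h2
  by_cases hm : Q.m = 0
  · rw [if_pos hm] at h1 h2
    exact ⟨le_trans (min_le_left _ _) h1, le_trans h2 (le_max_right _ _)⟩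
  · rw [if_neg hm] at h1 h2
    obtain ⟨j, hθ, hφ, hp⟩ := h1
    obtain ⟨j2, hφ2, hψ, hp2⟩ := h2
    by_cases hjj : j = j2
    · subst hjj
      rcases hp with ⟨he, hle⟩ | ⟨ho, hle⟩ <;> rcases hp2 with ⟨he2, hle2⟩ | ⟨ho2, hle2⟩
      · exact ⟨le_trans (min_le_right _ _) hle2, le_trans hle (le_max_left _ _)⟩
      · exact absurd he ho2
      · exact absurd he2 ho
      · exact ⟨le_trans (min_le_left _ _) hle, le_trans hle2 (le_max_right _ _)⟩
    · rcases arcs_overlap hφ hφ2 hjj with ⟨hj2, hφe⟩ | ⟨hj2, hφe⟩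
      · -- j2 = j + 1, φ = α (j+1)
        rcases hp with ⟨he, hle⟩ | ⟨ho, hle⟩
        · -- Even j, φ ≤ θ and θ ≤ α (j+1) = φ so θ = φ
          have hθφ : θ = φ := le_antisymm (hφe ▸ hθ.2) hle
          rw [← hθφ]
          exact ⟨min_le_left _ _, le_max_left _ _⟩
        · -- Odd j so j2 = j+1 is even
          have he2 : Even j2 := by
            rw [hj2]; rcases Int.even_or_odd j with h | h
            · exact absurd h ho
            · exact h.add_one
          rcases hp2 with ⟨_, hle2⟩ | ⟨ho2, _⟩
          · -- ψ ≤ φ, but φ = α j2 is the bottom of the arc of j2, so ψ = φ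
            have hψφ : ψ = φ := by
              have : Q.α j2 ≤ ψ := hψ.1
              have hb : φ = Q.α j2 := by rw [hj2]; exact hφe
              linarith [hb ▸ this]
            rw [← hψφ]
            exact ⟨min_le_right _ _, le_max_right _ _⟩
          · exact absurd he2 ho2
      · -- j = j2 + 1, φ = α j
        rcases hp2 with ⟨he2, hle2⟩ | ⟨ho2, hle2⟩
        · -- Even j2, ψ ≤ φ; φ = α j = α (j2+1) is the top of arc j2... and j odd
          have ho : ¬ Even j := by
            rw [hj2]; intro h
            exact (Int.even_add_one.mp h) he2
          rcases hp with ⟨he', _⟩ | ⟨_, hle⟩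
          · exact absurd he' ho
          · -- θ ≤ φ, φ = α j is bottom of arc j, so θ = φ
            have hθφ : θ = φ := le_antisymm hle (hφe ▸ hθ.1)
            rw [← hθφ]
            exact ⟨min_le_left _ _, le_max_left _ _⟩
        · -- Odd j2, φ ≤ ψ; φ = α (j2+1) top of arc j2 so ψ = φ
          have hψφ : ψ = φ := by
            have hup : ψ ≤ Q.α (j2 + 1) := hψ.2
            have hb : φ = Q.α (j2 + 1) := by rw [← hj2]; exact hφe
            linarith [hb ▸ hup]
          rw [← hψφ]
          exact ⟨min_le_right _ _, le_max_right _ _⟩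

lemma covRel_up (j : ℤ) (h : Q.m = 0 ∨ ¬ Even j) : Q.covRel (Q.α j) (Q.α (j + 1)) := by
  unfold covRel
  split_ifs with hm
  · exact Q.mono.monotone (by omega)
  · rcases h with h0 | hodd
    · exact absurd h0 hm
    · exact ⟨j, ⟨le_rfl, Q.mono.monotone (by omega)⟩,
        ⟨Q.mono.monotone (by omega), le_rfl⟩,
        Or.inr ⟨hodd, Q.mono.monotone (by omega)⟩⟩

lemma covRel_down (j : ℤ) (hm : Q.m ≠ 0) (he : Even j) :
    Q.covRel (Q.α (j + 1)) (Q.α j) := by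
  unfold covRel
  rw [if_neg hm]
  exact ⟨j, ⟨Q.mono.monotone (by omega), le_rfl⟩, ⟨le_rfl, Q.mono.monotone (by omega)⟩,
    Or.inl ⟨he, Q.mono.monotone (by omega)⟩⟩

variable (Q)

/-- The number of arcs used to travel once around the circle. -/
def periodN : ℕ := if Q.m = 0 then 2 else 2 * Q.m

lemma periodN_pos : 0 < Q.periodN := by
  unfold periodN; split_ifs <;> omega

lemma α_periodN : Q.α (Q.periodN : ℤ) = Q.α 0 + 2 * Real.pi := by
  unfold periodN
  split_ifs with hm
  · have h2 : ((2:ℕ):ℤ) = 2 := by norm_cast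
    rw [h2, Q.cyc hm 2, Q.cyc hm 0]
    push_cast; ring
  · have := Q.per hm 0
    rw [zero_add] at this
    rw [← this]
    norm_cast

end AtR
/-- A representation (i.e. an `S¹` persistence module) of the continuous quiver of
type Ã, presented equivariantly on the universal cover: vector spaces `obj θ`,
linear maps along every morphism of the quiver (encoded by `covRel`), and a
periodicity isomorphism `per` identifying `obj (θ + 2π)` with `obj θ`,
compatibly with the maps. -/
structure SRep (k : Type) [Field k] (Q : AtR) where
  obj : ℝ → Type
  [instAdd : ∀ θ, AddCommGroup (obj θ)]
  [instMod : ∀ θ, Module k (obj θ)]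
  map : ∀ {θ φ : ℝ}, Q.covRel θ φ → (obj θ →ₗ[k] obj φ)
  map_id : ∀ (θ : ℝ) (h : Q.covRel θ θ), map h = LinearMap.id
  map_comp : ∀ {θ φ ψ : ℝ} (h1 : Q.covRel θ φ) (h2 : Q.covRel φ ψ) (h3 : Q.covRel θ ψ),
      map h3 = (map h2).comp (map h1)
  per : ∀ θ : ℝ, obj (θ + 2 * Real.pi) ≃ₗ[k] obj θ
  per_map : ∀ {θ φ : ℝ} (h : Q.covRel θ φ) (h' : Q.covRel (θ + 2 * Real.pi) (φ + 2 * Real.pi)),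
      (map h).comp (per θ).toLinearMap = ((per φ).toLinearMap).comp (map h')

attribute [instance] SRep.instAdd SRep.instMod

namespace SRep

variable {k : Type} [Field k] {Q : AtR}

lemma per_map_apply (V : SRep k Q) {θ φ : ℝ} (h : Q.covRel θ φ)
    (h' : Q.covRel (θ + 2 * Real.pi) (φ + 2 * Real.pi)) (x : V.obj (θ + 2 * Real.pi)) :
    V.map h (V.per θ x) = V.per φ (V.map h' x) :=
  LinearMap.congr_fun (V.per_map h h') x

/-- Transport along an equality of points of the cover. -/
def castO (V : SRep k Q) {a b : ℝ} (h : a = b) : V.obj a ≃ₗ[k] V.obj b :=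
  h ▸ LinearEquiv.refl k (V.obj a)

/-- A family of linear maps is a morphism of representations if it is natural with
respect to all the structure maps and the periodicity isomorphisms. -/
def IsHomFam (V W : SRep k Q) (f : ∀ θ, V.obj θ →ₗ[k] W.obj θ) : Prop :=
  (∀ {θ φ : ℝ} (h : Q.covRel θ φ) (v : V.obj θ), f φ (V.map h v) = W.map h (f θ v)) ∧
  (∀ (θ : ℝ) (v : V.obj (θ + 2 * Real.pi)), f θ (V.per θ v) = W.per θ (f (θ + 2 * Real.pi) v))

/-- Two representations are isomorphic if there is a family of linear isomorphisms
natural with respect to the structure maps and the periodicity isomorphisms. -/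
def RepIso (V W : SRep k Q) : Prop :=
  ∃ e : ∀ θ, V.obj θ ≃ₗ[k] W.obj θ,
    (∀ {θ φ : ℝ} (h : Q.covRel θ φ) (v : V.obj θ), e φ (V.map h v) = W.map h (e θ v)) ∧
    (∀ (θ : ℝ) (v : V.obj (θ + 2 * Real.pi)), e θ (V.per θ v) = W.per θ (e (θ + 2 * Real.pi) v))

/-- `U` is a (direct) summand of `V`. -/
def SummandOf (U V : SRep k Q) : Prop :=
  ∃ (f : ∀ θ, U.obj θ →ₗ[k] V.obj θ) (g : ∀ θ, V.obj θ →ₗ[k] U.obj θ),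
    IsHomFam U V f ∧ IsHomFam V U g ∧ ∀ (θ : ℝ) (u : U.obj θ), g θ (f θ u) = u

/-- A representation is nonzero if some of its spaces is nonzero. -/
def Nonzero (V : SRep k Q) : Prop := ∃ (θ : ℝ) (v : V.obj θ), v ≠ 0

/-- Pointwise finite-dimensional. -/
def Pwf (V : SRep k Q) : Prop := ∀ θ, FiniteDimensional k (V.obj θ)

/-- Binary direct sum of representations. -/
def prod (V W : SRep k Q) : SRep k Q where
  obj θ := V.obj θ × W.obj θ
  map h := (V.map h).prodMap (W.map h)
  map_id θ h := by
    rw [V.map_id θ h, W.map_id θ h]; exact LinearMap.prodMap_id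
  map_comp h1 h2 h3 := by
    try dsimp only
    rw [V.map_comp h1 h2 h3, W.map_comp h1 h2 h3]
    exact (LinearMap.prodMap_comp _ _ _ _).symm
  per θ := (V.per θ).prodCongr (W.per θ)
  per_map h h' := by
    try dsimp only
    apply LinearMap.ext
    rintro ⟨a, b⟩
    simp only [LinearMap.comp_apply, LinearEquiv.coe_coe, LinearMap.prodMap_apply,
      LinearEquiv.prodCongr_apply]
    exact Prod.ext (V.per_map_apply h h' a) (W.per_map_apply h h' b)

/-- Arbitrary direct sums of representations. -/
def dsum {B : Type} (A : B → SRep k Q) : SRep k Q where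
  obj θ := Π₀ b, (A b).obj θ
  map h := DFinsupp.mapRange.linearMap fun b => (A b).map h
  map_id θ h := by
    try dsimp only
    have : (fun b => (A b).map h) = fun b => (LinearMap.id : (A b).obj θ →ₗ[k] _) := by
      funext b; exact (A b).map_id θ h
    rw [this]; exact DFinsupp.mapRange.linearMap_id
  map_comp h1 h2 h3 := by
    try dsimp only
    have : (fun b => (A b).map h3) = fun b => ((A b).map h2).comp ((A b).map h1) := by
      funext b; exact (A b).map_comp h1 h2 h3
    rw [this]; exact DFinsupp.mapRange.linearMap_comp _ _
  per θ := DFinsupp.mapRange.linearEquiv fun b => (A b).per θ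
  per_map h h' := by
    try dsimp only
    apply LinearMap.ext
    intro x
    ext b
    simp only [LinearMap.comp_apply, LinearEquiv.coe_coe,
      DFinsupp.mapRange.linearEquiv_apply, DFinsupp.mapRange.linearMap_apply,
      DFinsupp.mapRange_apply]
    exact (A b).per_map_apply h h' (x b)

/-- Indecomposability. -/
def Indecomposable (V : SRep k Q) : Prop :=
  V.Nonzero ∧ ∀ A B : SRep k Q, A.Nonzero → B.Nonzero → ¬ RepIso V (A.prod B)

end SRep
/-! ## Bars -/

/-- The basis of the bar `M_I` at the point `e^{iθ}`: the set `ξ⁻¹(e^{iθ}) ∩ I`. -/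
def barIdx (I : Set ℝ) (θ : ℝ) : Type :=
  {β : ℝ // β ∈ I ∧ ∃ n : ℤ, β = θ + 2 * Real.pi * n}

/-- The canonical identification of the bars' bases over `θ + 2π` and `θ`. -/
def barShift (I : Set ℝ) (θ : ℝ) : barIdx I (θ + 2 * Real.pi) ≃ barIdx I θ where
  toFun b := ⟨b.1, b.2.1, by
    obtain ⟨n, hn⟩ := b.2.2
    exact ⟨n + 1, by push_cast; linarith⟩⟩
  invFun b := ⟨b.1, b.2.1, by
    obtain ⟨n, hn⟩ := b.2.2
    exact ⟨n - 1, by push_cast; linarith⟩⟩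
  left_inv b := by apply Subtype.ext; rfl
  right_inv b := by apply Subtype.ext; rfl

variable (k : Type) [Field k]

/-- The structure map of the bar `M_I` along a morphism `θ → φ`:
a basis vector `b_β` is sent to `b_{β - θ + φ}` when `β - θ + φ ∈ I` and to `0`
otherwise. -/
def barMapHom (I : Set ℝ) (θ φ : ℝ) :
    (barIdx I θ →₀ k) →ₗ[k] (barIdx I φ →₀ k) := by
  classical
  exact Finsupp.linearCombination k (fun β : barIdx I θ =>
    if h : β.1 - θ + φ ∈ I then
      Finsupp.single (⟨β.1 - θ + φ, h, by
        obtain ⟨n, hn⟩ := β.2.2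
        exact ⟨n, by rw [hn]; ring⟩⟩ : barIdx I φ) (1 : k)
    else 0)

variable {k}

namespace SRep

variable {Q : AtR}

/-- `V` is (isomorphic to) the bar `M_I` on the bounded interval `I ⊂ ℝ`. -/
def BarOn (I : Set ℝ) (V : SRep k Q) : Prop :=
  I.Nonempty ∧ Bornology.IsBounded I ∧ I.OrdConnected ∧
  ∃ e : ∀ θ, V.obj θ ≃ₗ[k] (barIdx I θ →₀ k),
    (∀ {θ φ : ℝ} (h : Q.covRel θ φ) (v : V.obj θ),
        e φ (V.map h v) = barMapHom k I θ φ (e θ v)) ∧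
    (∀ (θ : ℝ) (v : V.obj (θ + 2 * Real.pi)),
        e θ (V.per θ v) = Finsupp.equivMapDomain (barShift I θ) (e (θ + 2 * Real.pi) v))

/-- `V` is a bar. -/
def IsBar (V : SRep k Q) : Prop := ∃ I : Set ℝ, BarOn I V

end SRep
/-! ## Jordan cells -/

namespace SRep

variable {k : Type} [Field k] {Q : AtR}

/-- One step of the monodromy: the isomorphism `V(α j) ≃ V(α (j+1))` obtained
from the structure map along the arc (or its inverse, depending on the
orientation of the arc). -/
def step (V : SRep k Q)
    (hiso : ∀ ⦃θ φ : ℝ⦄ (h : Q.covRel θ φ), Function.Bijective (V.map h)) (j : ℤ) :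
    V.obj (Q.α j) ≃ₗ[k] V.obj (Q.α (j + 1)) :=
  if h : Q.m = 0 ∨ ¬ Even j then
    LinearEquiv.ofBijective _ (hiso (AtR.covRel_up j h))
  else
    (LinearEquiv.ofBijective _ (hiso (AtR.covRel_down j
      (by push_neg at h; exact h.1) (by push_neg at h; exact h.2)))).symm

/-- The zig-zag isomorphism from `V(α 0)` to `V(α n)`. -/
def zig (V : SRep k Q)
    (hiso : ∀ ⦃θ φ : ℝ⦄ (h : Q.covRel θ φ), Function.Bijective (V.map h)) :
    (n : ℕ) → (V.obj (Q.α 0) ≃ₗ[k] V.obj (Q.α (n : ℤ)))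
  | 0 => V.castO (congrArg Q.α (by norm_num))
  | (n + 1) => ((V.zig hiso n).trans (V.step hiso (n : ℤ))).trans
      (V.castO (congrArg Q.α (by push_cast; ring)))

/-- The monodromy automorphism `V̂` of `V(α 0)`: travel once counterclockwise
around the circle (via `zig`) and come back via the periodicity isomorphism. -/
def monodromy (V : SRep k Q)
    (hiso : ∀ ⦃θ φ : ℝ⦄ (h : Q.covRel θ φ), Function.Bijective (V.map h)) :
    V.obj (Q.α 0) ≃ₗ[k] V.obj (Q.α 0) :=
  ((V.zig hiso Q.periodN).trans (V.castO Q.α_periodN)).trans (V.per (Q.α 0))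

/-- `V` is a Jordan cell: its spaces have a constant finite dimension `d ≥ 1`,
all its structure maps are isomorphisms, and `V(α 0)` admits no direct sum
decomposition into two nonzero subspaces invariant under the monodromy. -/
structure IsJordanCell (V : SRep k Q) : Prop where
  bij : ∀ ⦃θ φ : ℝ⦄ (h : Q.covRel θ φ), Function.Bijective (V.map h)
  dim : ∃ d : ℕ, 1 ≤ d ∧ ∀ θ, Module.finrank k (V.obj θ) = d
  indec : ∀ U W : Submodule k (V.obj (Q.α 0)), IsCompl U W →
      (∀ u ∈ U, V.monodromy bij u ∈ U) → (∀ w ∈ W, V.monodromy bij w ∈ W) →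
      U = ⊥ ∨ W = ⊥

end SRep
/-! ## Restriction -/

/-- The periodization of a subset of `ℝ`: the full preimage under `ξ` of its image
in the circle. -/
def periodize (s : Set ℝ) : Set ℝ := {θ | ∃ n : ℤ, θ + 2 * Real.pi * n ∈ s}

lemma periodize_shift (s : Set ℝ) (θ : ℝ) :
    θ ∈ periodize s ↔ θ + 2 * Real.pi ∈ periodize s := by
  constructor
  · rintro ⟨n, hn⟩
    refine ⟨n - 1, ?_⟩
    push_cast
    rw [show θ + 2 * Real.pi + 2 * Real.pi * ((n : ℝ) - 1) = θ + 2 * Real.pi * (n : ℝ) from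
      by ring]
    exact hn
  · rintro ⟨n, hn⟩
    refine ⟨n + 1, ?_⟩
    push_cast
    rw [show θ + 2 * Real.pi * ((n : ℝ) + 1) = θ + 2 * Real.pi + 2 * Real.pi * (n : ℝ) from
      by ring]
    exact hn

namespace SRep

open Classical

variable {k : Type} [Field k] {Q : AtR}

/-- The restriction `V|_A` of a representation to a (2π-periodic) subset `A ⊂ ℝ`
corresponding to a subset of the circle.  Its space at `θ ∈ A` is `V(θ)` and `0`
elsewhere; its structure map along a morphism `θ → φ` is `V(θ,φ)` when every
point through which the morphism factors lies in `A` (the set of such points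
being the interval `[min θ φ, max θ φ]`), and `0` otherwise. -/
def restrict (V : SRep k Q) (A : Set ℝ) (hA : ∀ θ, θ ∈ A ↔ θ + 2 * Real.pi ∈ A) :
    SRep k Q where
  obj θ := PLift (θ ∈ A) → V.obj θ
  map {θ φ} h :=
    { toFun := fun F _ =>
        if c : Set.Icc (min θ φ) (max θ φ) ⊆ A then
          V.map h (F ⟨c ⟨min_le_left θ φ, le_max_left θ φ⟩⟩) else 0
      map_add' := by
        intro F G; funext hφ
        by_cases c : Set.Icc (min θ φ) (max θ φ) ⊆ A <;> simp [c]
      map_smul' := by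
        intro a F; funext hφ
        by_cases c : Set.Icc (min θ φ) (max θ φ) ⊆ A <;> simp [c] }
  map_id θ h := by
    apply LinearMap.ext; intro F; funext hφ
    have c : Set.Icc (min θ θ) (max θ θ) ⊆ A := by
      rw [min_self, max_self, Set.Icc_self]
      exact Set.singleton_subset_iff.mpr hφ.down
    simp only [LinearMap.coe_mk, AddHom.coe_mk, LinearMap.id_coe, id_eq]
    rw [dif_pos c, V.map_id θ h]
    rfl
  map_comp {θ φ ψ} h1 h2 h3 := by
    apply LinearMap.ext; intro F; funext hψ
    have hkey := AtR.covRel_hull h1 h2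
    have s1 : Set.Icc (min θ φ) (max θ φ) ⊆ Set.Icc (min θ ψ) (max θ ψ) :=
      Set.Icc_subset_Icc (le_min (min_le_left θ ψ) hkey.1) (max_le (le_max_left θ ψ) hkey.2)
    have s2 : Set.Icc (min φ ψ) (max φ ψ) ⊆ Set.Icc (min θ ψ) (max θ ψ) :=
      Set.Icc_subset_Icc (le_min hkey.1 (min_le_right θ ψ)) (max_le hkey.2 (le_max_right θ ψ))
    by_cases c1 : Set.Icc (min θ φ) (max θ φ) ⊆ A
    · by_cases c2 : Set.Icc (min φ ψ) (max φ ψ) ⊆ A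
      · have c3 : Set.Icc (min θ ψ) (max θ ψ) ⊆ A := by
          intro z hz
          rcases le_total θ ψ with hθψ | hθψ
          · rw [min_eq_left hθψ, max_eq_right hθψ] at hz
            rcases le_total z φ with hzφ | hzφ
            · exact c1 ⟨le_trans (min_le_left θ φ) hz.1, le_trans hzφ (le_max_right θ φ)⟩
            · exact c2 ⟨le_trans (min_le_left φ ψ) hzφ, le_trans hz.2 (le_max_right φ ψ)⟩
          · rw [min_eq_right hθψ, max_eq_left hθψ] at hz
            rcases le_total z φ with hzφ | hzφ
            · exact c2 ⟨le_trans (min_le_right φ ψ) hz.1, le_trans hzφ (le_max_left φ ψ)⟩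
            · exact c1 ⟨le_trans (min_le_right θ φ) hzφ, le_trans hz.2 (le_max_left θ φ)⟩
        simp only [LinearMap.coe_mk, AddHom.coe_mk, LinearMap.comp_apply]
        rw [dif_pos c3, dif_pos c2, dif_pos c1, V.map_comp h1 h2 h3]
        rfl
      · have c3 : ¬ Set.Icc (min θ ψ) (max θ ψ) ⊆ A := fun c3 => c2 fun z hz => c3 (s2 hz)
        simp only [LinearMap.coe_mk, AddHom.coe_mk, LinearMap.comp_apply]
        rw [dif_neg c3, dif_neg c2]
    · have c3 : ¬ Set.Icc (min θ ψ) (max θ ψ) ⊆ A := fun c3 => c1 fun z hz => c3 (s1 hz)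
      simp only [LinearMap.coe_mk, AddHom.coe_mk, LinearMap.comp_apply]
      rw [dif_neg c3]
      by_cases c2 : Set.Icc (min φ ψ) (max φ ψ) ⊆ A
      · rw [dif_pos c2, dif_neg c1, map_zero]
      · rw [dif_neg c2]
  per θ :=
    { toFun := fun F hθ => V.per θ (F ⟨(hA θ).mp hθ.down⟩)
      map_add' := by intro F G; funext hθ; simp
      map_smul' := by intro a F; funext hθ; simp
      invFun := fun G h2 => (V.per θ).symm (G ⟨(hA θ).mpr h2.down⟩)
      left_inv := by intro F; funext h2; simp
      right_inv := by intro G; funext hθ; simp }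
  per_map {θ φ} h h' := by
    apply LinearMap.ext; intro F; funext hφ
    have e1 : min (θ + 2 * Real.pi) (φ + 2 * Real.pi) = min θ φ + 2 * Real.pi :=
      min_add_add_right θ φ _
    have e2 : max (θ + 2 * Real.pi) (φ + 2 * Real.pi) = max θ φ + 2 * Real.pi :=
      max_add_add_right θ φ _
    have hcc : (Set.Icc (min (θ + 2 * Real.pi) (φ + 2 * Real.pi))
        (max (θ + 2 * Real.pi) (φ + 2 * Real.pi)) ⊆ A) ↔
        (Set.Icc (min θ φ) (max θ φ) ⊆ A) := by
      rw [e1, e2]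
      constructor
      · intro c z hz
        rw [hA z]
        exact c ⟨by linarith [hz.1], by linarith [hz.2]⟩
      · intro c z hz
        have h2 : z - 2 * Real.pi ∈ Set.Icc (min θ φ) (max θ φ) :=
          ⟨by linarith [hz.1], by linarith [hz.2]⟩
        have h3 := (hA (z - 2 * Real.pi)).mp (c h2)
        simpa using h3
    simp only [LinearMap.coe_mk, AddHom.coe_mk, LinearMap.comp_apply, LinearEquiv.coe_coe,
      LinearEquiv.coe_mk]
    by_cases c : Set.Icc (min θ φ) (max θ φ) ⊆ A
    · rw [dif_pos c, dif_pos (hcc.mpr c)]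
      exact V.per_map_apply h h' _
    · rw [dif_neg c, dif_neg (fun cc => c (hcc.mp cc)), map_zero]

/-- `V` is finitistic: it is pointwise finite-dimensional and for each arc
`R̄_n = [α n, α (n+1)]`, every bar in the bar code decomposition of the
restriction `V|_{R̄_n}` has support touching an endpoint of the arc. -/
def Finitistic (V : SRep k Q) : Prop :=
  Pwf V ∧ ∀ n : ℤ, ∃ (B : Type) (Wb : B → SRep k Q) (I : B → Set ℝ),
    (∀ b, BarOn (I b) (Wb b) ∧ I b ⊆ Set.Icc (Q.α n) (Q.α (n + 1)) ∧
      (Q.α n ∈ I b ∨ Q.α (n + 1) ∈ I b)) ∧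
    RepIso (V.restrict (periodize (Set.Icc (Q.α n) (Q.α (n + 1))))
      (periodize_shift _)) (dsum Wb)

end SRep
/-! ## Representations of (finite) quivers of type Ã_n

An `Ã_n` quiver has `N = n + 1` vertices, indexed by `ZMod N`, arranged
counterclockwise in a cycle, with exactly one arrow between the vertices `i` and
`i + 1` for each `i : ZMod N`; the orientation function `o` records its direction
(`o i = true` iff the arrow goes `i → i + 1`). -/

/-- A representation of the `Ã_{N-1}` quiver with orientation `o`. -/
structure CycRep (k : Type) [Field k] (N : ℕ) (o : ZMod N → Bool) where
  M : ZMod N → Type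
  [instAdd : ∀ i, AddCommGroup (M i)]
  [instMod : ∀ i, Module k (M i)]
  up : ∀ i : ZMod N, o i = true → (M i →ₗ[k] M (i + 1))
  down : ∀ i : ZMod N, o i = false → (M (i + 1) →ₗ[k] M i)

attribute [instance] CycRep.instAdd CycRep.instMod

namespace CycRep

variable {k : Type} [Field k] {N : ℕ} {o : ZMod N → Bool}

/-- Transport along an equality of vertices. -/
def castM (A : CycRep k N o) {i i' : ZMod N} (h : i = i') : A.M i ≃ₗ[k] A.M i' :=
  h ▸ LinearEquiv.refl k (A.M i)

/-- Isomorphism of representations of the `Ã_{N-1}` quiver. -/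
def Iso (A B : CycRep k N o) : Prop :=
  ∃ e : ∀ i, A.M i ≃ₗ[k] B.M i,
    (∀ (i : ZMod N) (h : o i = true) (v : A.M i),
        e (i + 1) (A.up i h v) = B.up i h (e i v)) ∧
    (∀ (i : ZMod N) (h : o i = false) (v : A.M (i + 1)),
        e i (A.down i h v) = B.down i h (e (i + 1) v))

def Nonzero (A : CycRep k N o) : Prop := ∃ (i : ZMod N) (v : A.M i), v ≠ 0

/-- Binary direct sum. -/
def prod (A B : CycRep k N o) : CycRep k N o where
  M i := A.M i × B.M i
  up i h := (A.up i h).prodMap (B.up i h)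
  down i h := (A.down i h).prodMap (B.down i h)

/-- Arbitrary direct sum. -/
def dsum {B : Type} (A : B → CycRep k N o) : CycRep k N o where
  M i := Π₀ b, (A b).M i
  up i h := DFinsupp.mapRange.linearMap fun b => (A b).up i h
  down i h := DFinsupp.mapRange.linearMap fun b => (A b).down i h

def Indecomposable (A : CycRep k N o) : Prop :=
  A.Nonzero ∧ ∀ B C : CycRep k N o, B.Nonzero → C.Nonzero → ¬ Iso A (B.prod C)

end CycRep

/-- The basis of the bar on the interval `{a, ..., b} ⊂ ℤ` at the vertex `i`:
integers in the interval congruent to `i` mod `N`. -/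
def cycIdx (N : ℕ) (a b : ℤ) (i : ZMod N) : Type :=
  {m : ℤ // m ∈ Set.Icc a b ∧ ((m : ZMod N) = i)}

variable (k : Type) [Field k]

open Classical in
/-- The bar's map along an arrow `i → i + 1` : `b_m ↦ b_{m+1}` when `m+1` stays in
the interval, and `0` otherwise. -/
def cycBarUp (N : ℕ) (a b : ℤ) (i : ZMod N) :
    (cycIdx N a b i →₀ k) →ₗ[k] (cycIdx N a b (i + 1) →₀ k) :=
  Finsupp.linearCombination k (fun m : cycIdx N a b i =>
    if hm : m.1 + 1 ∈ Set.Icc a b then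
      Finsupp.single (⟨m.1 + 1, hm, by push_cast; rw [m.2.2]⟩ : cycIdx N a b (i + 1)) (1 : k)
    else 0)

open Classical in
/-- The bar's map along an arrow `i + 1 → i` : `b_m ↦ b_{m-1}` when `m-1` stays in
the interval, and `0` otherwise. -/
def cycBarDown (N : ℕ) (a b : ℤ) (i : ZMod N) :
    (cycIdx N a b (i + 1) →₀ k) →ₗ[k] (cycIdx N a b i →₀ k) :=
  Finsupp.linearCombination k (fun m : cycIdx N a b (i + 1) =>
    if hm : m.1 - 1 ∈ Set.Icc a b then
      Finsupp.single (⟨m.1 - 1, hm, by push_cast; rw [m.2.2]; ring⟩ : cycIdx N a b i) (1 : k)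
    else 0)

variable {k}

namespace CycRep

variable {k : Type} [Field k] {N : ℕ} {o : ZMod N → Bool}

/-- `A` is (isomorphic to) the bar on the interval `{a, ..., b}` of `ℤ`. -/
def BarOn (a b : ℤ) (A : CycRep k N o) : Prop :=
  a ≤ b ∧ ∃ e : ∀ i, A.M i ≃ₗ[k] (cycIdx N a b i →₀ k),
    (∀ (i : ZMod N) (h : o i = true) (v : A.M i),
        e (i + 1) (A.up i h v) = cycBarUp k N a b i (e i v)) ∧
    (∀ (i : ZMod N) (h : o i = false) (v : A.M (i + 1)),
        e i (A.down i h v) = cycBarDown k N a b i (e (i + 1) v))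

def IsBar (A : CycRep k N o) : Prop := ∃ a b : ℤ, BarOn a b A

/-- One step `M i ≃ M (i+1)` of the monodromy of a representation all of whose
arrow maps are isomorphisms. -/
def stepC (A : CycRep k N o)
    (hup : ∀ (i : ZMod N) (h : o i = true), Function.Bijective (A.up i h))
    (hdown : ∀ (i : ZMod N) (h : o i = false), Function.Bijective (A.down i h))
    (i : ZMod N) : A.M i ≃ₗ[k] A.M (i + 1) :=
  if h : o i = true then LinearEquiv.ofBijective _ (hup i h)
  else (LinearEquiv.ofBijective _ (hdown i (by revert h; cases o i <;> simp))).symm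

def zigC (A : CycRep k N o)
    (hup : ∀ (i : ZMod N) (h : o i = true), Function.Bijective (A.up i h))
    (hdown : ∀ (i : ZMod N) (h : o i = false), Function.Bijective (A.down i h)) :
    (n : ℕ) → (A.M 0 ≃ₗ[k] A.M (n : ZMod N))
  | 0 => A.castM (by norm_num)
  | (n + 1) => ((A.zigC hup hdown n).trans (A.stepC hup hdown (n : ZMod N))).trans
      (A.castM (by push_cast; ring))

/-- The monodromy `M̂ : M 0 ≃ M 0` obtained by composing the arrow maps and their
inverses once around the cycle. -/
def monodromyC (A : CycRep k N o)
    (hup : ∀ (i : ZMod N) (h : o i = true), Function.Bijective (A.up i h))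
    (hdown : ∀ (i : ZMod N) (h : o i = false), Function.Bijective (A.down i h)) :
    A.M 0 ≃ₗ[k] A.M 0 :=
  (A.zigC hup hdown N).trans (A.castM (by simp))

/-- `A` is a Jordan cell representation of the `Ã_{N-1}` quiver. -/
structure IsJordan (A : CycRep k N o) : Prop where
  bijUp : ∀ (i : ZMod N) (h : o i = true), Function.Bijective (A.up i h)
  bijDown : ∀ (i : ZMod N) (h : o i = false), Function.Bijective (A.down i h)
  dim : ∃ d : ℕ, 1 ≤ d ∧ ∀ i, Module.finrank k (A.M i) = d
  indec : ∀ U W : Submodule k (A.M 0), IsCompl U W →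
      (∀ u ∈ U, A.monodromyC bijUp bijDown u ∈ U) →
      (∀ w ∈ W, A.monodromyC bijUp bijDown w ∈ W) → U = ⊥ ∨ W = ⊥

end CycRep
/-! ## Partitions of the circle and push downs -/

/-- A finite partition of the circle into (at least two) path-connected parts,
presented on the universal cover: `2π`-periodically ordered intervals `J j`
(`j : ℤ`), with `J (j + N)` the translate of `J j`; the parts of the circle are
the images of the `J j`, and `j` reduces mod `N` to the index of the part. -/
structure CircPartition (Q : AtR) where
  N : ℕ
  hN : 2 ≤ N
  J : ℤ → Set ℝ
  nonempty : ∀ j, (J j).Nonempty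
  ordconn : ∀ j, (J j).OrdConnected
  ordered : ∀ {j j' : ℤ}, j < j' → ∀ x ∈ J j, ∀ y ∈ J j', x < y
  cover : ∀ θ : ℝ, ∃ j, θ ∈ J j
  jper : ∀ (j : ℤ) (θ : ℝ), θ ∈ J j ↔ θ + 2 * Real.pi ∈ J (j + N)

namespace CircPartition

variable {Q : AtR} (C : CircPartition Q)

/-- The index of the part containing `θ`. -/
def partIdx (θ : ℝ) : ℤ := Classical.choose (C.cover θ)

lemma mem_partIdx (θ : ℝ) : θ ∈ C.J (C.partIdx θ) := Classical.choose_spec (C.cover θ)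

lemma partIdx_eq {θ : ℝ} {j : ℤ} (h : θ ∈ C.J j) : C.partIdx θ = j := by
  by_contra hne
  rcases lt_or_gt_of_ne hne with hlt | hlt
  · exact lt_irrefl θ (C.ordered hlt _ (C.mem_partIdx θ) _ h)
  · exact lt_irrefl θ (C.ordered hlt _ h _ (C.mem_partIdx θ))

lemma partIdx_shift (θ : ℝ) : C.partIdx (θ + 2 * Real.pi) = C.partIdx θ + C.N :=
  C.partIdx_eq ((C.jper _ _).mp (C.mem_partIdx θ))

/-- The index of the part containing `θ`, as a vertex of the auxiliary quiver. -/
def partZ (θ : ℝ) : ZMod C.N := ((C.partIdx θ : ℤ) : ZMod C.N)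

lemma partZ_shift (θ : ℝ) : C.partZ (θ + 2 * Real.pi) = C.partZ θ := by
  unfold partZ
  rw [C.partIdx_shift θ]
  push_cast
  simp

lemma partZ_congr {θ φ : ℝ} (hp : C.partIdx θ = C.partIdx φ) : C.partZ θ = C.partZ φ := by
  unfold partZ; rw [hp]

lemma partZ_succ {θ φ : ℝ} (hp : C.partIdx φ = C.partIdx θ + 1) :
    C.partZ θ + 1 = C.partZ φ := by
  unfold partZ; rw [hp]; push_cast; ring

lemma partZ_pred {θ φ : ℝ} (hp : C.partIdx θ = C.partIdx φ + 1) :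
    C.partZ θ = C.partZ φ + 1 := by
  unfold partZ; rw [hp]; push_cast; ring

/-- There is an arrow from the part of `J j` to the part of `J (j+1)` in the
auxiliary quiver (their union being automatically path-connected). -/
def dirUp (j : ℤ) : Prop := ∃ x ∈ C.J j, ∃ y ∈ C.J (j + 1), Q.covRel x y

/-- There is an arrow from the part of `J (j+1)` to the part of `J j`. -/
def dirDown (j : ℤ) : Prop := ∃ x ∈ C.J (j + 1), ∃ y ∈ C.J j, Q.covRel x y

end CircPartition

namespace SRep

variable {k : Type} [Field k] {Q : AtR}

/-- `U` is the push down to the continuous quiver of the representation `A` of the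
auxiliary `Ã_{N-1}` quiver of the partition `C` (with orientation `o`):
`U` is constant equal to `A.M i` on the `i`-th part, with identity maps within a
part, the maps of `A` across boundaries of parts, and the evident periodicity. -/
def PushdownOf (C : CircPartition Q) (o : ZMod C.N → Bool) (A : CycRep k C.N o)
    (U : SRep k Q) : Prop :=
  ∃ e : ∀ θ, U.obj θ ≃ₗ[k] A.M (C.partZ θ),
    (∀ {θ φ : ℝ} (h : Q.covRel θ φ) (hp : C.partIdx θ = C.partIdx φ) (v : U.obj θ),
        e φ (U.map h v) = A.castM (C.partZ_congr hp) (e θ v)) ∧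
    (∀ {θ φ : ℝ} (h : Q.covRel θ φ) (hp : C.partIdx φ = C.partIdx θ + 1)
        (ht : o (C.partZ θ) = true) (v : U.obj θ),
        e φ (U.map h v) = A.castM (C.partZ_succ hp) (A.up (C.partZ θ) ht (e θ v))) ∧
    (∀ {θ φ : ℝ} (h : Q.covRel θ φ) (hp : C.partIdx θ = C.partIdx φ + 1)
        (hf : o (C.partZ φ) = false) (v : U.obj θ),
        e φ (U.map h v) = A.down (C.partZ φ) hf (A.castM (C.partZ_pred hp) (e θ v))) ∧
    (∀ (θ : ℝ) (v : U.obj (θ + 2 * Real.pi)),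
        e θ (U.per θ v) = A.castM (C.partZ_shift θ) (e (θ + 2 * Real.pi) v))

/-- Transport between the values of `V` at representative points whose indices
agree modulo the period, using the periodicity isomorphism if needed. -/
def ptBridge (V : SRep k Q) (pt : ℤ → ℝ) (Nn : ℕ)
    (hper : ∀ j : ℤ, pt (j + (Nn : ℤ)) = pt j + 2 * Real.pi) {a b : ℤ}
    (h : a = b ∨ a = b + (Nn : ℤ)) : V.obj (pt a) ≃ₗ[k] V.obj (pt b) :=
  if he : a = b then V.castO (congrArg pt he)
  else (V.castO (show pt a = pt b + 2 * Real.pi by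
      rw [h.resolve_left he]; exact hper b)).trans (V.per (pt b))

lemma zmod_val_succ {N : ℕ} (hN : 2 ≤ N) (i : ZMod N) :
    (((i + 1 : ZMod N).val : ℤ) = (i.val : ℤ) + 1) ∨
      ((i.val : ℤ) + 1 = ((i + 1 : ZMod N).val : ℤ) + (N : ℤ)) := by
  haveI : NeZero N := ⟨by omega⟩
  haveI : Fact (1 < N) := ⟨by omega⟩
  have hval : (i + 1 : ZMod N).val = (i.val + 1) % N := by
    rw [ZMod.val_add, ZMod.val_one]
  have hlt : i.val < N := ZMod.val_lt i
  rcases Nat.lt_or_ge (i.val + 1) N with h | h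
  · left; rw [hval, Nat.mod_eq_of_lt h]; push_cast; ring
  · right
    have he : i.val + 1 = N := by omega
    rw [hval, he, Nat.mod_self]
    push_cast
    omega

/-- The auxiliary representation `M_V` of the auxiliary quiver of a partition `C`,
given by the values of `V` at the representative points `pt`. -/
def auxOfPoints (V : SRep k Q) (C : CircPartition Q) (o : ZMod C.N → Bool) (pt : ℤ → ℝ)
    (hper : ∀ j : ℤ, pt (j + (C.N : ℤ)) = pt j + 2 * Real.pi)
    (hup : ∀ (i : ZMod C.N), o i = true → Q.covRel (pt (i.val : ℤ)) (pt ((i.val : ℤ) + 1)))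
    (hdown : ∀ (i : ZMod C.N), o i = false → Q.covRel (pt ((i.val : ℤ) + 1)) (pt (i.val : ℤ))) :
    CycRep k C.N o where
  M i := V.obj (pt (i.val : ℤ))
  up i h := (V.ptBridge pt C.N hper
      ((zmod_val_succ C.hN i).imp Eq.symm id)).toLinearMap ∘ₗ V.map (hup i h)
  down i h := V.map (hdown i h) ∘ₗ (V.ptBridge pt C.N hper
      ((zmod_val_succ C.hN i).imp Eq.symm id)).symm.toLinearMap

/-- `U` is the refinement of `V` with respect to the partition `C` and the choice
of representative points `pt`: `U(θ) = V(pt (partIdx θ))`, with structure maps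
induced by those of `V` between representative points. -/
def RefinementOf (V : SRep k Q) (C : CircPartition Q) (pt : ℤ → ℝ)
    (hper : ∀ j : ℤ, pt (j + (C.N : ℤ)) = pt j + 2 * Real.pi) (U : SRep k Q) : Prop :=
  (∀ j, pt j ∈ C.J j) ∧
  ∃ e : ∀ θ, U.obj θ ≃ₗ[k] V.obj (pt (C.partIdx θ)),
    (∀ {θ φ : ℝ} (h : Q.covRel θ φ) (hp : C.partIdx θ = C.partIdx φ) (v : U.obj θ),
        e φ (U.map h v) = V.castO (congrArg pt hp) (e θ v)) ∧
    (∀ {θ φ : ℝ} (h : Q.covRel θ φ)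
        (hc : Q.covRel (pt (C.partIdx θ)) (pt (C.partIdx φ))) (v : U.obj θ),
        e φ (U.map h v) = V.map hc (e θ v)) ∧
    (∀ (θ : ℝ) (v : U.obj (θ + 2 * Real.pi)),
        e θ (U.per θ v) = V.per (pt (C.partIdx θ))
          ((V.castO (show pt (C.partIdx (θ + 2 * Real.pi)) = pt (C.partIdx θ) + 2 * Real.pi by
            rw [C.partIdx_shift θ]; exact hper _)) (e (θ + 2 * Real.pi) v)))

end SRep
/-! ## The endomorphism ring -/

namespace SRep

variable {k : Type} [Field k] {Q : AtR}

/-- The endomorphism ring of a representation: the subring of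
`∀ θ, End (V θ)` consisting of the natural families (with multiplication given by
pointwise composition). -/
def endSubring (V : SRep k Q) : Subring (∀ θ, Module.End k (V.obj θ)) where
  carrier := {f | IsHomFam V V f}
  mul_mem' := by
    rintro a b ⟨ha1, ha2⟩ ⟨hb1, hb2⟩
    constructor
    · intro θ φ h v
      simp only [Pi.mul_apply, Module.End.mul_apply]
      rw [hb1 h v, ha1 h]
    · intro θ v
      simp only [Pi.mul_apply, Module.End.mul_apply]
      rw [hb2 θ v, ha2 θ]
  one_mem' := by
    constructor
    · intro θ φ h v; simp
    · intro θ v; simp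
  add_mem' := by
    rintro a b ⟨ha1, ha2⟩ ⟨hb1, hb2⟩
    constructor
    · intro θ φ h v
      simp only [Pi.add_apply, LinearMap.add_apply]
      rw [ha1 h v, hb1 h v, map_add]
    · intro θ v
      simp only [Pi.add_apply, LinearMap.add_apply]
      rw [ha2 θ v, hb2 θ v, map_add]
  zero_mem' := by
    constructor
    · intro θ φ h v; simp
    · intro θ v; simp
  neg_mem' := by
    rintro a ⟨ha1, ha2⟩
    constructor
    · intro θ φ h v
      simp only [Pi.neg_apply, LinearMap.neg_apply]
      rw [ha1 h v, map_neg]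
    · intro θ v
      simp only [Pi.neg_apply, LinearMap.neg_apply]
      rw [ha2 θ v, map_neg]

end SRep

/-!
An isomorphism of representations preserves the rank of every structure map. For the bar `M_I`
the map along a morphism `e^{iθ} → e^{iφ}` has rank `#{n | θ + 2πn ∈ I ∧ φ + 2πn ∈ I}`, and each
point is related by a morphism, one way or the other, to all points near it. Taking `φ = θ`
gives the number of lifts of each point lying in `I`; taking `φ` slightly above (below) `θ`
detects whether one of these lifts is the greatest (least) element of `I`. So the endpoints
attained by `I` and `J` agree modulo `2π`. If `I = (a, b)` is open, `a` is still located modulo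
`2π` as the place where the number of lifts jumps up. Once one endpoint is aligned, a translate
of one interval lies in the other, and equal numbers of lifts force equality. Conversely,
translating by `2πn` identifies the bases of `M_I` and `M_J` compatibly with all structure maps.
-/

open Filter Topology

lemma bijOn_add_right_iff {α : Type*} [AddGroup α] {c : α} {s t : Set α} :
    BijOn (· + c) s t ↔ ∀ x, x ∈ s ↔ x + c ∈ t :=
  (Equiv.addRight c).image_eq_iff_bijOn.symm.trans
    ((Equiv.eq_preimage_iff_image_eq _ _ _).symm.trans Set.ext_iff)

lemma finrank_range_eq_of_comp_eq {R M₁ M₂ N₁ N₂ : Type*} [Semiring R] [AddCommMonoid M₁]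
    [AddCommMonoid M₂] [AddCommMonoid N₁] [AddCommMonoid N₂] [Module R M₁] [Module R M₂]
    [Module R N₁] [Module R N₂] {f : M₁ →ₗ[R] M₂} {g : N₁ →ₗ[R] N₂} (e₁ : M₁ ≃ₗ[R] N₁)
    (e₂ : M₂ ≃ₗ[R] N₂) (h : e₂.toLinearMap ∘ₗ f = g ∘ₗ e₁.toLinearMap) :
    Module.finrank R (LinearMap.range f) = Module.finrank R (LinearMap.range g) := by
  have hg : g = (e₂.toLinearMap ∘ₗ f) ∘ₗ e₁.symm.toLinearMap := by
    rw [h, LinearMap.comp_assoc, LinearEquiv.comp_symm, LinearMap.comp_id]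
  rw [hg, LinearEquiv.range_comp, LinearMap.range_comp, LinearEquiv.finrank_map_eq]

lemma Set.OrdConnected.eventually_mem_nhdsGT_iff {α : Type*} [LinearOrder α] [TopologicalSpace α]
    [ClosedIciTopology α] {s : Set α} (hs : s.OrdConnected) {z : α} (hz : z ∈ s) :
    ∀ᶠ y in 𝓝[>] z, y ∈ s ↔ ¬ IsGreatest s z := by
  by_cases hg : IsGreatest s z
  · filter_upwards [self_mem_nhdsWithin] with y (hy : z < y)
    simpa [hg] using fun hys => hy.not_ge (hg.2 hys)
  · obtain ⟨w, hw, hzw⟩ : ∃ w ∈ s, z < w := by simpa [IsGreatest, hz, upperBounds] using hg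
    filter_upwards [Ioc_mem_nhdsGT hzw] with y hy
    simpa [hg] using hs.out hz hw (Ioc_subset_Icc_self hy)

lemma Set.OrdConnected.eventually_mem_nhdsLT_iff {α : Type*} [LinearOrder α] [TopologicalSpace α]
    [ClosedIicTopology α] {s : Set α} (hs : s.OrdConnected) {z : α} (hz : z ∈ s) :
    ∀ᶠ y in 𝓝[<] z, y ∈ s ↔ ¬ IsLeast s z :=
  hs.dual.eventually_mem_nhdsGT_iff (α := αᵒᵈ) hz

lemma Set.OrdConnected.Ioo_csInf_csSup_subset {α : Type*} [ConditionallyCompleteLinearOrder α]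
    {s : Set α} (hs : s.OrdConnected) (hne : s.Nonempty) : Ioo (sInf s) (sSup s) ⊆ s :=
  fun _ hy =>
    let ⟨_, ha, hay⟩ := exists_lt_of_csInf_lt hne hy.1
    let ⟨_, hb, hyb⟩ := exists_lt_of_lt_csSup hne hy.2
    hs.out ha hb ⟨hay.le, hyb.le⟩

lemma Set.OrdConnected.mem_of_mem_Icc_csInf_csSup {α : Type*} [ConditionallyCompleteLinearOrder α]
    {s : Set α} (hs : s.OrdConnected) (hne : s.Nonempty) {y : α} (hy : y ∈ Icc (sInf s) (sSup s))
    (hinf : y = sInf s → sInf s ∈ s) (hsup : y = sSup s → sSup s ∈ s) : y ∈ s := by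
  rcases hy.1.eq_or_lt with h | h
  · exact h ▸ hinf h.symm
  rcases hy.2.eq_or_lt with h' | h'
  · exact h'.symm ▸ hsup h'
  exact hs.Ioo_csInf_csSup_subset hne ⟨h, h'⟩

lemma Set.OrdConnected.eq_Ioo_csInf_csSup {α : Type*} [ConditionallyCompleteLinearOrder α]
    {s : Set α} (hs : s.OrdConnected) (hne : s.Nonempty) (hb : BddBelow s) (ha : BddAbove s)
    (hinf : sInf s ∉ s) (hsup : sSup s ∉ s) : s = Ioo (sInf s) (sSup s) :=
  subset_antisymm
    (fun x hx => ⟨(csInf_le hb hx).lt_of_ne (by rintro rfl; exact hinf hx),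
      (le_csSup ha hx).lt_of_ne (by rintro rfl; exact hsup hx)⟩)
    (hs.Ioo_csInf_csSup_subset hne)

lemma nonempty_iff_of_ncard_sdiff_eq {α : Type*} {A B A' B' : Set α} (hA : A.Finite)
    (hA' : A'.Finite) (hB : B ⊆ A) (hB' : B' ⊆ A') (hcard : A.ncard = A'.ncard)
    (hdiff : (A \ B).ncard = (A' \ B').ncard) : B.Nonempty ↔ B'.Nonempty := by
  have hBfin := hA.subset hB
  have hBfin' := hA'.subset hB'
  rw [ncard_sdiff hB hBfin, ncard_sdiff hB' hBfin'] at hdiff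
  have := ncard_le_ncard hB hA
  have := ncard_le_ncard hB' hA'
  rw [← ncard_pos hBfin, ← ncard_pos hBfin']
  omega

lemma eventually_ceil_sub_eq (t : ℝ) : ∀ᶠ ε in 𝓝[>] (0 : ℝ), ⌈t - ε⌉ = ⌈t⌉ := by
  filter_upwards [Ioo_mem_nhdsGT (show 0 < t - (⌈t⌉ - 1) by linarith [Int.ceil_lt_add_one t])]
    with ε hε
  rw [Int.ceil_eq_iff]
  constructor <;> linarith [hε.1, hε.2, Int.le_ceil t]

lemma eventually_floor_sub_eq {t : ℝ} (ht : (⌊t⌋ : ℝ) < t) :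
    ∀ᶠ ε in 𝓝[>] (0 : ℝ), ⌊t - ε⌋ = ⌊t⌋ := by
  filter_upwards [Ioo_mem_nhdsGT (sub_pos.2 ht)] with ε hε
  rw [Int.floor_eq_iff]
  constructor <;> linarith [hε.1, hε.2, Int.lt_floor_add_one t]

lemma eventually_floor_neg_eq_neg_one : ∀ᶠ ε in 𝓝[>] (0 : ℝ), ⌊-ε⌋ = -1 := by
  filter_upwards [Ioc_mem_nhdsGT one_pos] with ε hε
  rw [Int.floor_eq_iff]
  constructor <;> push_cast <;> linarith [hε.1, hε.2]

section Lifts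

variable {p x : ℝ} {I J S : Set ℝ}

/-- For `p = 2π` this indexes the basis `ξ⁻¹(e^{ix}) ∩ S` of the bar `M_S` at `e^{ix}`. -/
def liftIdx (p : ℝ) (S : Set ℝ) (x : ℝ) : Set ℤ := {n | x + p * n ∈ S}

def overlapCount (p : ℝ) (S : Set ℝ) (x y : ℝ) : ℕ := (liftIdx p S x ∩ liftIdx p S y).ncard

lemma overlapCount_comm (p : ℝ) (S : Set ℝ) (x y : ℝ) :
    overlapCount p S x y = overlapCount p S y x := by
  rw [overlapCount, overlapCount, inter_comm]

lemma liftIdx_finite (hp : 0 < p) (hS : Bornology.IsBounded S) (x : ℝ) :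
    (liftIdx p S x).Finite := by
  refine (finite_Icc ⌈(sInf S - x) / p⌉ ⌊(sSup S - x) / p⌋).subset fun n hn => ?_
  have h := subset_Icc_csInf_csSup hS.bddBelow hS.bddAbove hn
  constructor
  · rw [Int.ceil_le, div_le_iff₀ hp]; linarith [h.1]
  · rw [Int.le_floor, le_div_iff₀ hp]; linarith [h.2]

lemma liftIdx_Ioo (hp : 0 < p) (a b x : ℝ) :
    liftIdx p (Ioo a b) x = Ioo ⌊(a - x) / p⌋ ⌈(b - x) / p⌉ := by
  ext n
  simp only [liftIdx, mem_ofPred_eq, mem_Ioo, Int.floor_lt, Int.lt_ceil, div_lt_iff₀ hp,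
    lt_div_iff₀ hp]
  constructor <;> rintro ⟨h1, h2⟩ <;> constructor <;> linarith

lemma ncard_liftIdx_Ioo (hp : 0 < p) {a b : ℝ} (hab : a < b) (x : ℝ) :
    ((liftIdx p (Ioo a b) x).ncard : ℤ) + 1 = ⌈(b - x) / p⌉ - ⌊(a - x) / p⌋ := by
  have hlt : ⌊(a - x) / p⌋ < ⌈(b - x) / p⌉ := Int.cast_lt.mp <| (Int.floor_le _).trans_lt <|
    (div_lt_div_of_pos_right (by linarith) hp).trans_le (Int.le_ceil _)
  rw [liftIdx_Ioo hp, ← Finset.coe_Ioo, ncard_coe_finset, Int.card_Ioo]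
  omega

/-- Just to the right of `x` there are more lifts in `(c, d)` than at `x` exactly when
`x ∈ c + pℤ`; this locates `c` modulo `p`. -/
lemma exists_eq_add_of_ncard_liftIdx_Ioo_eq (hp : 0 < p) {a b c d : ℝ} (hab : a < b)
    (hcd : c < d) (h : ∀ x, (liftIdx p (Ioo a b) x).ncard = (liftIdx p (Ioo c d) x).ncard) :
    ∃ n : ℤ, c = a + p * n := by
  by_contra hne
  have hfrac : (⌊(a - c) / p⌋ : ℝ) < (a - c) / p := by
    refine (Int.floor_le _).lt_of_ne fun heq => hne ⟨-⌊(a - c) / p⌋, ?_⟩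
    rw [Int.cast_neg, heq]
    field_simp
    ring
  have H : ∀ x, ⌈(b - x) / p⌉ - ⌊(a - x) / p⌋ = ⌈(d - x) / p⌉ - ⌊(c - x) / p⌋ := fun x => by
    rw [← ncard_liftIdx_Ioo hp hab, ← ncard_liftIdx_Ioo hp hcd, h x]
  obtain ⟨ε, hb, ha, hd, hc⟩ := ((eventually_ceil_sub_eq ((b - c) / p)).and
    ((eventually_floor_sub_eq hfrac).and ((eventually_ceil_sub_eq ((d - c) / p)).and
    eventually_floor_neg_eq_neg_one))).exists
  have hshift : ∀ u, (u - (c + p * ε)) / p = (u - c) / p - ε := fun u => by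
    field_simp
    ring
  have h₀ := H c
  have h₁ := H (c + p * ε)
  rw [hshift, hshift, hshift, hshift, hb, ha, hd, sub_self, zero_div, zero_sub, hc] at h₁
  rw [sub_self, zero_div, Int.floor_zero] at h₀
  omega

lemma eventually_liftIdx_inter_nhdsGT (hfin : (liftIdx p S x).Finite) (hS : S.OrdConnected) :
    ∀ᶠ y in 𝓝[>] x,
      liftIdx p S x ∩ liftIdx p S y = liftIdx p S x \ {n | IsGreatest S (x + p * n)} := by
  have key : ∀ᶠ y in 𝓝[>] x, ∀ n ∈ liftIdx p S x, y + p * n ∈ S ↔ ¬IsGreatest S (x + p * n) :=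
    (eventually_all_finite hfin).2 fun n hn =>
      ((continuous_add_const _).continuousWithinAt.tendsto_nhdsWithin
        fun y (hy : x < y) => add_lt_add_left hy _).eventually (hS.eventually_mem_nhdsGT_iff hn)
  filter_upwards [key] with y hy
  ext n
  exact ⟨fun h => ⟨h.1, (hy n h.1).1 h.2⟩, fun h => ⟨h.1, (hy n h.1).2 h.2⟩⟩

lemma eventually_liftIdx_inter_nhdsLT (hfin : (liftIdx p S x).Finite) (hS : S.OrdConnected) :
    ∀ᶠ y in 𝓝[<] x,
      liftIdx p S x ∩ liftIdx p S y = liftIdx p S x \ {n | IsLeast S (x + p * n)} := by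
  have key : ∀ᶠ y in 𝓝[<] x, ∀ n ∈ liftIdx p S x, y + p * n ∈ S ↔ ¬IsLeast S (x + p * n) :=
    (eventually_all_finite hfin).2 fun n hn =>
      ((continuous_add_const _).continuousWithinAt.tendsto_nhdsWithin
        fun y (hy : y < x) => add_lt_add_left hy _).eventually (hS.eventually_mem_nhdsLT_iff hn)
  filter_upwards [key] with y hy
  ext n
  exact ⟨fun h => ⟨h.1, (hy n h.1).1 h.2⟩, fun h => ⟨h.1, (hy n h.1).2 h.2⟩⟩

lemma exists_isGreatest_iff_of_overlapCount_eq (hp : 0 < p) (hIbd : Bornology.IsBounded I)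
    (hIoc : I.OrdConnected) (hJbd : Bornology.IsBounded J) (hJoc : J.OrdConnected)
    (h : ∀ x, ∀ᶠ y in 𝓝 x, overlapCount p I x y = overlapCount p J x y) (x : ℝ) :
    (∃ n : ℤ, IsGreatest I (x + p * n)) ↔ ∃ n : ℤ, IsGreatest J (x + p * n) := by
  have hfinI := liftIdx_finite hp hIbd x
  have hfinJ := liftIdx_finite hp hJbd x
  obtain ⟨y, hI, hJ, hy⟩ := ((eventually_liftIdx_inter_nhdsGT hfinI hIoc).and
    ((eventually_liftIdx_inter_nhdsGT hfinJ hJoc).and (nhdsWithin_le_nhds (h x)))).exists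
  rw [overlapCount, overlapCount, hI, hJ] at hy
  exact nonempty_iff_of_ncard_sdiff_eq hfinI hfinJ (fun n hn => hn.1) (fun n hn => hn.1)
    (by simpa [overlapCount] using (h x).self_of_nhds) hy

lemma exists_isLeast_iff_of_overlapCount_eq (hp : 0 < p) (hIbd : Bornology.IsBounded I)
    (hIoc : I.OrdConnected) (hJbd : Bornology.IsBounded J) (hJoc : J.OrdConnected)
    (h : ∀ x, ∀ᶠ y in 𝓝 x, overlapCount p I x y = overlapCount p J x y) (x : ℝ) :
    (∃ n : ℤ, IsLeast I (x + p * n)) ↔ ∃ n : ℤ, IsLeast J (x + p * n) := by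
  have hfinI := liftIdx_finite hp hIbd x
  have hfinJ := liftIdx_finite hp hJbd x
  obtain ⟨y, hI, hJ, hy⟩ := ((eventually_liftIdx_inter_nhdsLT hfinI hIoc).and
    ((eventually_liftIdx_inter_nhdsLT hfinJ hJoc).and (nhdsWithin_le_nhds (h x)))).exists
  rw [overlapCount, overlapCount, hI, hJ] at hy
  exact nonempty_iff_of_ncard_sdiff_eq hfinI hfinJ (fun n hn => hn.1) (fun n hn => hn.1)
    (by simpa [overlapCount] using (h x).self_of_nhds) hy

lemma csSup_mem_and_exists_eq_add (hIbd : BddAbove I) (hI : sSup I ∈ I)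
    (h : (∃ n : ℤ, IsGreatest I (sSup I + p * n)) → ∃ n : ℤ, IsGreatest J (sSup I + p * n)) :
    sSup J ∈ J ∧ ∃ n : ℤ, sSup J = sSup I + p * n := by
  obtain ⟨n, hn⟩ := h ⟨0, by simpa using ⟨hI, fun y hy => le_csSup hIbd hy⟩⟩
  exact ⟨hn.csSup_eq ▸ hn.1, n, hn.csSup_eq⟩

lemma csInf_mem_and_exists_eq_add (hIbd : BddBelow I) (hI : sInf I ∈ I)
    (h : (∃ n : ℤ, IsLeast I (sInf I + p * n)) → ∃ n : ℤ, IsLeast J (sInf I + p * n)) :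
    sInf J ∈ J ∧ ∃ n : ℤ, sInf J = sInf I + p * n := by
  obtain ⟨n, hn⟩ := h ⟨0, by simpa using ⟨hI, fun y hy => csInf_le hIbd hy⟩⟩
  exact ⟨hn.csInf_eq ▸ hn.1, n, hn.csInf_eq⟩

/-- Translation by `p * n` embeds the lifts in `I` into those in `J`, and equal counts make this
injection onto. -/
lemma mem_of_add_mem_of_ncard_liftIdx_eq {n : ℤ} (hfin : (liftIdx p J x).Finite)
    (hcard : (liftIdx p I x).ncard = (liftIdx p J x).ncard) (hIJ : ∀ z ∈ I, z + p * n ∈ J)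
    (hx : x + p * n ∈ J) : x ∈ I := by
  have himage : (· + n) '' liftIdx p I x = liftIdx p J x := by
    refine eq_of_subset_of_ncard_le ?_ ?_ hfin
    · rintro _ ⟨m, hm, rfl⟩
      simpa [liftIdx, mul_add, add_assoc] using hIJ _ hm
    · rw [ncard_image_of_injective _ (add_left_injective n), hcard]
  obtain ⟨m, hm, hmn⟩ : n ∈ (· + n) '' liftIdx p I x := himage ▸ hx
  obtain rfl : m = 0 := by simpa using hmn
  simpa [liftIdx] using hm

lemma mem_iff_add_mem_of_csInf_le_of_le_csSup (hp : 0 < p) (hIbd : Bornology.IsBounded I)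
    (hJne : J.Nonempty) (hJbd : Bornology.IsBounded J) (hJoc : J.OrdConnected)
    (hcard : ∀ x, (liftIdx p I x).ncard = (liftIdx p J x).ncard)
    (hinf : sInf I ∈ I → sInf J ∈ J) (hsup : sSup I ∈ I → sSup J ∈ J) {n : ℤ}
    (hle : sInf J ≤ sInf I + p * n) (hle' : sSup I + p * n ≤ sSup J) (x : ℝ) :
    x ∈ I ↔ x + p * n ∈ J := by
  have hIJ : ∀ z ∈ I, z + p * n ∈ J := fun z hz => by
    have h₁ := csInf_le hIbd.bddBelow hz
    have h₂ := le_csSup hIbd.bddAbove hz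
    refine hJoc.mem_of_mem_Icc_csInf_csSup hJne ⟨by linarith, by linarith⟩ (fun h => ?_)
      (fun h => ?_)
    · exact hinf (le_antisymm h₁ (by linarith) ▸ hz)
    · exact hsup (le_antisymm (by linarith) h₂ ▸ hz)
  exact ⟨hIJ x, mem_of_add_mem_of_ncard_liftIdx_eq (liftIdx_finite hp hJbd x) (hcard x) hIJ⟩

lemma exists_csInf_or_csSup_eq_add (hp : 0 < p) (hIne : I.Nonempty)
    (hIbd : Bornology.IsBounded I) (hIoc : I.OrdConnected) (hJne : J.Nonempty)
    (hJbd : Bornology.IsBounded J) (hJoc : J.OrdConnected)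
    (hcard : ∀ x, (liftIdx p I x).ncard = (liftIdx p J x).ncard)
    (hinf : sInf I ∈ I → ∃ n : ℤ, sInf J = sInf I + p * n)
    (hsup : sSup I ∈ I → ∃ n : ℤ, sSup J = sSup I + p * n)
    (hinf' : sInf J ∈ J → sInf I ∈ I) (hsup' : sSup J ∈ J → sSup I ∈ I) :
    ∃ n : ℤ, sInf J = sInf I + p * n ∨ sSup J = sSup I + p * n := by
  by_cases hIinf : sInf I ∈ I
  · exact (hinf hIinf).imp fun _ => Or.inl
  by_cases hIsup : sSup I ∈ I
  · exact (hsup hIsup).imp fun _ => Or.inr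
  have hIeq := hIoc.eq_Ioo_csInf_csSup hIne hIbd.bddBelow hIbd.bddAbove hIinf hIsup
  have hJeq := hJoc.eq_Ioo_csInf_csSup hJne hJbd.bddBelow hJbd.bddAbove (mt hinf' hIinf)
    (mt hsup' hIsup)
  refine (exists_eq_add_of_ncard_liftIdx_Ioo_eq hp (b := sSup I) (d := sSup J) ?_ ?_
    fun x => ?_).imp fun _ => Or.inl
  · exact nonempty_Ioo.1 (hIeq ▸ hIne)
  · exact nonempty_Ioo.1 (hJeq ▸ hJne)
  · rw [← hIeq, ← hJeq, hcard]

theorem exists_mem_iff_add_mem_of_overlapCount_eq (hp : 0 < p) (hIne : I.Nonempty)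
    (hIbd : Bornology.IsBounded I) (hIoc : I.OrdConnected) (hJne : J.Nonempty)
    (hJbd : Bornology.IsBounded J) (hJoc : J.OrdConnected)
    (h : ∀ x, ∀ᶠ y in 𝓝 x, overlapCount p I x y = overlapCount p J x y) :
    ∃ n : ℤ, ∀ x, x ∈ I ↔ x + p * n ∈ J := by
  have hcard : ∀ x, (liftIdx p I x).ncard = (liftIdx p J x).ncard := fun x => by
    simpa [overlapCount] using (h x).self_of_nhds
  have hsup := exists_isGreatest_iff_of_overlapCount_eq hp hIbd hIoc hJbd hJoc h
  have hinf := exists_isLeast_iff_of_overlapCount_eq hp hIbd hIoc hJbd hJoc h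
  have hsupIJ := fun hI => csSup_mem_and_exists_eq_add hIbd.bddAbove hI (hsup _).1
  have hinfIJ := fun hI => csInf_mem_and_exists_eq_add hIbd.bddBelow hI (hinf _).1
  have hsupJI := fun hJ => csSup_mem_and_exists_eq_add hJbd.bddAbove hJ (hsup _).2
  have hinfJI := fun hJ => csInf_mem_and_exists_eq_add hJbd.bddBelow hJ (hinf _).2
  obtain ⟨n, hn⟩ := exists_csInf_or_csSup_eq_add hp hIne hIbd hIoc hJne hJbd hJoc hcard
    (hinfIJ · |>.2) (hsupIJ · |>.2) (hinfJI · |>.1) (hsupJI · |>.1)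
  refine ⟨n, ?_⟩
  have hcases : (sInf J ≤ sInf I + p * n ∧ sSup I + p * n ≤ sSup J) ∨
      (sInf I + p * n ≤ sInf J ∧ sSup J ≤ sSup I + p * n) := by
    rcases hn with hn | hn <;> rw [hn]
    · exact (le_total _ _).imp (⟨le_rfl, ·⟩) (⟨le_rfl, ·⟩)
    · exact (le_total _ _).symm.imp (⟨·, le_rfl⟩) (⟨·, le_rfl⟩)
  rcases hcases with ⟨hle, hle'⟩ | ⟨hle, hle'⟩
  · exact mem_iff_add_mem_of_csInf_le_of_le_csSup hp hIbd hJne hJbd hJoc hcard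
      (hinfIJ · |>.1) (hsupIJ · |>.1) hle hle'
  · intro x
    have := mem_iff_add_mem_of_csInf_le_of_le_csSup hp hJbd hIne hIbd hIoc (fun x => (hcard x).symm)
      (hinfJI · |>.1) (hsupJI · |>.1) (n := -n) (by push_cast; linarith) (by push_cast; linarith)
      (x + p * n)
    simpa using this.symm

end Lifts

namespace AtR

variable {Q : AtR}

lemma α_add_periodN (j : ℤ) : Q.α (j + Q.periodN) = Q.α j + 2 * Real.pi := by
  unfold periodN
  split_ifs with hm
  · rw [Q.cyc hm, Q.cyc hm]
    push_cast
    ring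
  · simpa using Q.per hm j

lemma α_add_periodN_mul (j T : ℤ) : Q.α (j + Q.periodN * T) = Q.α j + 2 * Real.pi * T := by
  induction T using Int.induction_on with
  | zero => simp
  | succ T ih =>
    rw [mul_add, mul_one, ← add_assoc, α_add_periodN, ih]
    push_cast
    ring
  | pred T ih =>
    have h := α_add_periodN (Q := Q) (j + Q.periodN * (-T - 1))
    rw [show j + Q.periodN * (-T - 1) + Q.periodN = j + Q.periodN * (-T) by ring, ih] at h
    push_cast at h ⊢
    linarith

lemma exists_α_le_lt (x : ℝ) : ∃ j : ℤ, Q.α j ≤ x ∧ x < Q.α (j + 1) := by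
  have hα (T : ℤ) : Q.α (Q.periodN * T) = Q.α 0 + 2 * Real.pi * T := by
    simpa using α_add_periodN_mul (Q := Q) 0 T
  obtain ⟨T, hT⟩ := exists_int_gt ((x - Q.α 0) / (2 * Real.pi))
  obtain ⟨T', hT'⟩ := exists_int_lt ((x - Q.α 0) / (2 * Real.pi))
  rw [div_lt_iff₀ Real.two_pi_pos] at hT
  rw [lt_div_iff₀ Real.two_pi_pos] at hT'
  obtain ⟨j, hj, hmax⟩ := Int.exists_greatest_of_bdd (P := fun j => Q.α j ≤ x)
    ⟨Q.periodN * T, fun j hj => (Q.mono.lt_iff_lt.1 (hj.trans_lt (by rw [hα]; linarith))).le⟩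
    ⟨Q.periodN * T', by rw [hα]; linarith⟩
  exact ⟨j, hj, not_le.1 fun h => by linarith [hmax _ h]⟩

lemma covRel_or_covRel_of_mem_Icc {j : ℤ} {u v : ℝ} (hu : u ∈ Icc (Q.α j) (Q.α (j + 1)))
    (hv : v ∈ Icc (Q.α j) (Q.α (j + 1))) : Q.covRel u v ∨ Q.covRel v u := by
  unfold covRel
  split_ifs
  · exact le_total u v
  · rcases le_total u v with huv | hvu <;> by_cases hj : Even j
    · exact Or.inr ⟨j, hv, hu, Or.inl ⟨hj, huv⟩⟩
    · exact Or.inl ⟨j, hu, hv, Or.inr ⟨hj, huv⟩⟩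
    · exact Or.inl ⟨j, hu, hv, Or.inl ⟨hj, hvu⟩⟩
    · exact Or.inr ⟨j, hv, hu, Or.inr ⟨hj, hvu⟩⟩

lemma eventually_covRel_or_covRel (x : ℝ) : ∀ᶠ y in 𝓝 x, Q.covRel x y ∨ Q.covRel y x := by
  obtain ⟨j, hj, hxj⟩ := exists_α_le_lt (Q := Q) x
  rcases hj.eq_or_lt with hj | hj
  · -- `x` is the common endpoint of the arcs `j - 1` and `j`
    have hα : Q.α (j - 1) < Q.α j := Q.mono (by omega)
    filter_upwards [Ioo_mem_nhds (hj ▸ hα) hxj] with y hy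
    rcases le_total y x with hyx | hxy
    · refine covRel_or_covRel_of_mem_Icc (j := j - 1) ?_ ?_ <;> rw [sub_add_cancel]
      exacts [⟨hj ▸ hα.le, hj.ge⟩, ⟨hy.1.le, hyx.trans hj.ge⟩]
    · exact covRel_or_covRel_of_mem_Icc ⟨hj.le, hxj.le⟩ ⟨hj.le.trans hxy, hy.2.le⟩
  · filter_upwards [Ioo_mem_nhds hj hxj] with y hy
    exact covRel_or_covRel_of_mem_Icc ⟨hj.le, hxj.le⟩ ⟨hy.1.le, hy.2.le⟩

end AtR

section Bars

variable {k : Type} [Field k] {I J : Set ℝ}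

def liftIdxEquivBarIdx (I : Set ℝ) (x : ℝ) : liftIdx (2 * Real.pi) I x ≃ barIdx I x :=
  Equiv.ofBijective (fun n => ⟨x + 2 * Real.pi * n, n.2, n, rfl⟩)
    ⟨fun _ _ h => Subtype.ext <| Int.cast_injective <|
      mul_left_cancel₀ Real.two_pi_pos.ne' <| add_left_cancel (congrArg Subtype.val h),
    fun β =>
      let ⟨n, hn⟩ := β.2.2
      ⟨⟨n, show x + 2 * Real.pi * n ∈ I from hn ▸ β.2.1⟩, Subtype.ext hn.symm⟩⟩

lemma range_barMapHom (I : Set ℝ) (u v : ℝ) :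
    LinearMap.range (barMapHom k I u v) =
      Finsupp.supported k k {γ : barIdx I v | γ.1 - v + u ∈ I} := by
  classical
  rw [barMapHom, Finsupp.range_linearCombination, Finsupp.supported_eq_span_single]
  apply le_antisymm <;> rw [Submodule.span_le]
  · rintro _ ⟨β, rfl⟩
    dsimp only
    split_ifs with h
    · exact Submodule.subset_span ⟨_, show β.1 - u + v - v + u ∈ I by simpa using β.2.1, rfl⟩
    · exact Submodule.zero_mem _
  · rintro _ ⟨γ, hγ, rfl⟩
    refine Submodule.subset_span ⟨⟨γ.1 - v + u, hγ, ?_⟩, ?_⟩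
    · obtain ⟨n, hn⟩ := γ.2.2
      exact ⟨n, by rw [hn]; ring⟩
    · have h : γ.1 - v + u - u + v ∈ I := by simpa using γ.2.1
      simp only [dif_pos h]
      congr
      simp

lemma finrank_range_barMapHom (hI : Bornology.IsBounded I) (u v : ℝ) :
    Module.finrank k (LinearMap.range (barMapHom k I u v)) =
      overlapCount (2 * Real.pi) I u v := by
  set T : Set (barIdx I v) := {γ | γ.1 - v + u ∈ I}
  have e : ↥(liftIdx (2 * Real.pi) I v ∩ liftIdx (2 * Real.pi) I u) ≃ T :=
    (Equiv.subtypeSubtypeEquivSubtypeInter _ _).symm.trans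
      ((liftIdxEquivBarIdx I v).subtypeEquiv fun n => by
        change u + _ ∈ I ↔ v + 2 * Real.pi * n - v + u ∈ I
        rw [add_sub_cancel_left, add_comm])
  have : Finite T :=
    e.finite_iff.1 ((liftIdx_finite Real.two_pi_pos hI v).inter_of_left _).to_subtype
  have := Fintype.ofFinite T
  rw [range_barMapHom, (Finsupp.supportedEquivFinsupp T).finrank_eq, Module.finrank_finsupp_self,
    ← Nat.card_eq_fintype_card, ← Nat.card_congr e, Nat.card_coe_set_eq, overlapCount, inter_comm]

def barTranslate {n : ℤ} (hIJ : ∀ x, x ∈ I ↔ x + 2 * Real.pi * n ∈ J) (θ : ℝ) :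
    barIdx I θ ≃ barIdx J θ where
  toFun β := ⟨β.1 + 2 * Real.pi * n, (hIJ _).1 β.2.1, by
    obtain ⟨m, hm⟩ := β.2.2
    exact ⟨m + n, by rw [hm]; push_cast; ring⟩⟩
  invFun γ := ⟨γ.1 - 2 * Real.pi * n, (hIJ _).2 (by simpa using γ.2.1), by
    obtain ⟨m, hm⟩ := γ.2.2
    exact ⟨m - n, by rw [hm]; push_cast; ring⟩⟩
  left_inv β := Subtype.ext (add_sub_cancel_right _ _)
  right_inv γ := Subtype.ext (sub_add_cancel _ _)

lemma barMapHom_comp_barTranslate {n : ℤ} (hIJ : ∀ x, x ∈ I ↔ x + 2 * Real.pi * n ∈ J)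
    (θ φ : ℝ) :
    barMapHom k J θ φ ∘ₗ (Finsupp.domLCongr (barTranslate hIJ θ)).toLinearMap =
      (Finsupp.domLCongr (barTranslate hIJ φ)).toLinearMap ∘ₗ barMapHom k I θ φ := by
  classical
  refine Finsupp.lhom_ext fun β c => ?_
  have hmem : (barTranslate hIJ θ β).1 - θ + φ ∈ J ↔ β.1 - θ + φ ∈ I := by
    change β.1 + 2 * Real.pi * n - θ + φ ∈ J ↔ _
    rw [hIJ (β.1 - θ + φ)]
    ring_nf
  simp only [LinearMap.comp_apply, LinearEquiv.coe_coe, Finsupp.domLCongr_single, barMapHom,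
    Finsupp.linearCombination_single, map_smul]
  congr 1
  split_ifs with h₁ h₂ h₂
  · refine Eq.trans ?_ (Finsupp.domLCongr_single _ _ _).symm
    congr 1
    exact Subtype.ext (show β.1 + 2 * Real.pi * n - θ + φ = β.1 - θ + φ + 2 * Real.pi * n by ring)
  · exact absurd (hmem.1 h₁) h₂
  · exact absurd (hmem.2 h₂) h₁
  · rw [map_zero]

end Bars

namespace SRep

variable {k : Type} [Field k] {Q : AtR} {V W : SRep k Q} {I J : Set ℝ}

lemma RepIso.finrank_range_map_eq (hVW : RepIso V W) {u v : ℝ} (h : Q.covRel u v) :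
    Module.finrank k (LinearMap.range (V.map h)) = Module.finrank k (LinearMap.range (W.map h)) :=
  let ⟨e, he, _⟩ := hVW
  finrank_range_eq_of_comp_eq (e u) (e v) (LinearMap.ext (he h))

lemma BarOn.finrank_range_map (hV : BarOn I V) {u v : ℝ} (h : Q.covRel u v) :
    Module.finrank k (LinearMap.range (V.map h)) = overlapCount (2 * Real.pi) I u v := by
  obtain ⟨-, hbd, -, e, he, -⟩ := hV
  rw [finrank_range_eq_of_comp_eq (g := barMapHom k I u v) (e u) (e v) (LinearMap.ext (he h)),
    finrank_range_barMapHom hbd]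

lemma RepIso.eventually_overlapCount_eq (hVW : RepIso V W) (hV : BarOn I V) (hW : BarOn J W)
    (x : ℝ) : ∀ᶠ y in 𝓝 x, overlapCount (2 * Real.pi) I x y = overlapCount (2 * Real.pi) J x y :=
  (AtR.eventually_covRel_or_covRel x).mono fun y hy => by
    rcases hy with h | h
    · rw [← hV.finrank_range_map h, ← hW.finrank_range_map h, hVW.finrank_range_map_eq h]
    · rw [overlapCount_comm, overlapCount_comm _ J, ← hV.finrank_range_map h,
        ← hW.finrank_range_map h, hVW.finrank_range_map_eq h]

lemma BarOn.translate (hV : BarOn I V) (hJne : J.Nonempty) (hJbd : Bornology.IsBounded J)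
    (hJoc : J.OrdConnected) {n : ℤ} (hIJ : ∀ x, x ∈ I ↔ x + 2 * Real.pi * n ∈ J) : BarOn J V := by
  obtain ⟨-, -, -, e, he, hper⟩ := hV
  refine ⟨hJne, hJbd, hJoc, fun θ => (e θ).trans (Finsupp.domLCongr (barTranslate hIJ θ)),
    fun h v => ?_, fun θ v => ?_⟩
  · simp only [LinearEquiv.trans_apply, he h]
    exact (LinearMap.congr_fun (barMapHom_comp_barTranslate hIJ _ _) _).symm
  · simp only [LinearEquiv.trans_apply, hper, Finsupp.domLCongr_apply, Finsupp.domCongr_apply,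
      ← Finsupp.equivMapDomain_trans]
    rfl

lemma BarOn.repIso (hV : BarOn I V) (hW : BarOn I W) : RepIso V W := by
  obtain ⟨-, -, -, eV, hV, hVper⟩ := hV
  obtain ⟨-, -, -, eW, hW, hWper⟩ := hW
  refine ⟨fun θ => (eV θ).trans (eW θ).symm, fun h v => ?_, fun θ v => ?_⟩
  · simp only [LinearEquiv.trans_apply, hV h, LinearEquiv.symm_apply_eq, hW h,
      LinearEquiv.apply_symm_apply]
  · simp only [LinearEquiv.trans_apply, hVper, LinearEquiv.symm_apply_eq, hWper,
      LinearEquiv.apply_symm_apply]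

end SRep

/-- Two bars `V ≅ M_I` and `W ≅ M_J` are isomorphic if and only if `J` is the
translate of `I` by an integer multiple of `2π`. -/
theorem bar_iso_iff {k : Type} [Field k] {Q : AtR} (V W : SRep k Q) (I J : Set ℝ)
    (hV : SRep.BarOn I V) (hW : SRep.BarOn J W) :
    SRep.RepIso V W ↔ ∃ n : ℤ, Set.BijOn (fun x => x + 2 * Real.pi * n) I J := by
  simp only [bijOn_add_right_iff]
  constructor
  · intro hVW
    exact exists_mem_iff_add_mem_of_overlapCount_eq Real.two_pi_pos hV.1 hV.2.1 hV.2.2.1 hW.1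
      hW.2.1 hW.2.2.1 (hVW.eventually_overlapCount_eq hV hW)
  · rintro ⟨n, hIJ⟩
    exact (hV.translate hW.1 hW.2.1 hW.2.2.1 hIJ).repIso hW
end
end

section
/- Let 𝒫 be a finite partition of S¹ with |𝒫| ≥ 2 into path-connected parts such that the auxiliary quiver Q — with vertex set 𝒫 and an arrow P → P' whenever P ≠ P', P ∪ P' is path-connected, and there exist x ∈ P, y ∈ P' with y ⪯ x — is a quiver of type Ã_{|𝒫|−1} (its underlying undirected graph is a cycle through all vertices). If M is a bar representation of Q, then the push down of M — the representation U of Ã_ℝ with U(x) = M(P) for x ∈ P, U equal to the identity on generating morphisms between points of the same part, and U equal to the composite of the maps of M along the corresponding arrows of Q on generating morphisms between points of distinct parts — is a bar of Ã_ℝ. -/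
open Set

noncomputable section

variable (k : Type) [Field k]

variable {k}

variable (k : Type) [Field k]

variable {k}

/-!
Each point `β` of the bar interval `I = C.barSet a b` lying over `θ` is labelled by the index
`C.partIdx β ∈ [a, b]` of its part; this identifies the basis of `M_I` at `θ` with the basis of
the bar `{a, …, b}` of the auxiliary quiver at the part of `θ`, and turns the map of `M_I` along
`θ → φ` into the shift `m ↦ m + (C.partIdx φ - C.partIdx θ)`. The push down acts by such shifts
(by `0` or `±1`) on morphisms within a part or between adjacent parts, the orientation of the
arrow being forced by the morphism. A general morphism factors through the parts it crosses, since
morphisms restrict to subintervals, and shifts of a common sign compose.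
-/

namespace AtR

variable {Q : AtR}

lemma covRel_split {θ z φ : ℝ} (h : Q.covRel θ φ) (hz : z ∈ uIcc θ φ) :
    Q.covRel θ z ∧ Q.covRel z φ := by
  unfold covRel at *
  split_ifs at * with hm
  · rwa [uIcc_of_le h] at hz
  · obtain ⟨j, hθ, hφ, hdir⟩ := h
    have hzj : z ∈ Icc (Q.α j) (Q.α (j + 1)) := ordConnected_Icc.uIcc_subset hθ hφ hz
    rcases hdir with ⟨he, hle⟩ | ⟨ho, hle⟩
    · rw [uIcc_of_ge hle] at hz
      exact ⟨⟨j, hθ, hzj, .inl ⟨he, hz.2⟩⟩, ⟨j, hzj, hφ, .inl ⟨he, hz.1⟩⟩⟩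
    · rw [uIcc_of_le hle] at hz
      exact ⟨⟨j, hθ, hzj, .inr ⟨ho, hz.1⟩⟩, ⟨j, hzj, hφ, .inr ⟨ho, hz.2⟩⟩⟩

end AtR

lemma barMapHom_single {I : Set ℝ} {θ φ : ℝ} {β : barIdx I θ} {β' : barIdx I φ}
    (hβ' : β'.1 = β.1 - θ + φ) (x : k) :
    barMapHom k I θ φ (Finsupp.single β x) = Finsupp.single β' x := by
  have hβ : β.1 - θ + φ ∈ I := hβ' ▸ β'.2.1
  rw [barMapHom, Finsupp.linearCombination_single, dif_pos hβ]
  exact (Finsupp.smul_single_one _ x).trans (congrArg (Finsupp.single · x) (Subtype.ext hβ'.symm))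

lemma barMapHom_single_eq_zero {I : Set ℝ} {θ φ : ℝ} {β : barIdx I θ}
    (hβ : β.1 - θ + φ ∉ I) (x : k) :
    barMapHom k I θ φ (Finsupp.single β x) = 0 := by
  rw [barMapHom, Finsupp.linearCombination_single, dif_neg hβ, smul_zero]

lemma barIdx.exists_sub_add {I : Set ℝ} {θ : ℝ} (β : barIdx I θ) {φ : ℝ}
    (hβ : β.1 - θ + φ ∈ I) : ∃ β' : barIdx I φ, β'.1 = β.1 - θ + φ := by
  obtain ⟨n, hn⟩ := β.2.2
  exact ⟨⟨β.1 - θ + φ, hβ, n, by rw [hn]; ring⟩, rfl⟩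

section CycBar

variable {N : ℕ} {a b : ℤ}

variable (k a b) in
open Classical in
def cycBarShift (d : ℤ) {i j : ZMod N} (h : i + d = j) :
    (cycIdx N a b i →₀ k) →ₗ[k] (cycIdx N a b j →₀ k) :=
  Finsupp.linearCombination k (fun m : cycIdx N a b i =>
    if hm : m.1 + d ∈ Set.Icc a b then
      Finsupp.single (⟨m.1 + d, hm, by push_cast; rw [m.2.2, h]⟩ : cycIdx N a b j) (1 : k)
    else 0)

lemma cycBarUp_eq (i : ZMod N) :
    cycBarUp k N a b i = cycBarShift k a b 1 (by push_cast; rfl) := rfl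

lemma cycBarDown_eq (i : ZMod N) :
    cycBarDown k N a b i = cycBarShift k a b (-1) (by push_cast; ring) := rfl

lemma cycIdx.exists_add {d : ℤ} {i j : ZMod N} (h : i + d = j) (m : cycIdx N a b i)
    (hm : m.1 + d ∈ Set.Icc a b) : ∃ m' : cycIdx N a b j, m'.1 = m.1 + d :=
  ⟨⟨m.1 + d, hm, by push_cast; rw [m.2.2, h]⟩, rfl⟩

lemma cycBarShift_single {d : ℤ} {i j : ZMod N} (h : i + d = j) {m : cycIdx N a b i}
    {m' : cycIdx N a b j} (hm' : m'.1 = m.1 + d) (x : k) :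
    cycBarShift k a b d h (Finsupp.single m x) = Finsupp.single m' x := by
  have hm : m.1 + d ∈ Set.Icc a b := hm' ▸ m'.2.1
  rw [cycBarShift, Finsupp.linearCombination_single, dif_pos hm]
  exact (Finsupp.smul_single_one _ x).trans (congrArg (Finsupp.single · x) (Subtype.ext hm'.symm))

lemma cycBarShift_single_eq_zero {d : ℤ} {i j : ZMod N} (h : i + d = j) {m : cycIdx N a b i}
    (hm : m.1 + d ∉ Set.Icc a b) (x : k) :
    cycBarShift k a b d h (Finsupp.single m x) = 0 := by
  rw [cycBarShift, Finsupp.linearCombination_single, dif_neg hm, smul_zero]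

lemma cycBarShift_congr {d d' : ℤ} {i j : ZMod N} (hd : d = d') (h : i + d = j)
    (h' : i + d' = j) : cycBarShift k a b d h = cycBarShift k a b d' h' := by
  subst hd; rfl

lemma cycBarShift_zero {i : ZMod N} (h : i + (0 : ℤ) = i) :
    cycBarShift k a b 0 h = LinearMap.id :=
  Finsupp.lhom_ext fun m x => cycBarShift_single h (add_zero m.1).symm x

lemma cycBarShift_cycBarShift {d e f : ℤ} {i j l : ZMod N} (hd : i + d = j) (he : j + e = l)
    (hf : i + f = l) (hdef : d + e = f) (hsign : 0 ≤ d ∧ 0 ≤ e ∨ d ≤ 0 ∧ e ≤ 0)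
    (w : cycIdx N a b i →₀ k) :
    cycBarShift k a b e he (cycBarShift k a b d hd w) = cycBarShift k a b f hf w := by
  subst hdef
  suffices cycBarShift k a b e he ∘ₗ cycBarShift k a b d hd = cycBarShift k a b (d + e) hf from
    LinearMap.congr_fun this w
  refine Finsupp.lhom_ext fun m x => ?_
  have hm := m.2.1
  rw [LinearMap.comp_apply]
  by_cases h1 : m.1 + d ∈ Set.Icc a b
  · obtain ⟨m₁, hm₁⟩ := cycIdx.exists_add hd m h1
    rw [cycBarShift_single hd hm₁]
    by_cases h2 : m.1 + (d + e) ∈ Set.Icc a b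
    · obtain ⟨m₂, hm₂⟩ := cycIdx.exists_add hf m h2
      rw [cycBarShift_single he (m' := m₂) (by rw [hm₂, hm₁, add_assoc]),
        cycBarShift_single hf hm₂]
    · rw [cycBarShift_single_eq_zero he (by rwa [hm₁, add_assoc]),
        cycBarShift_single_eq_zero hf h2]
  · have h2 : m.1 + (d + e) ∉ Set.Icc a b := by
      simp only [Set.mem_Icc] at hm h1 ⊢; omega
    rw [cycBarShift_single_eq_zero hd h1, map_zero, cycBarShift_single_eq_zero hf h2]

lemma CycRep.apply_castM {o : ZMod N → Bool} {A : CycRep k N o}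
    (e : ∀ i, A.M i ≃ₗ[k] (cycIdx N a b i →₀ k)) {i j : ZMod N} (h : i = j) (x : A.M i) :
    e j (A.castM h x) = cycBarShift k a b 0 (by rw [Int.cast_zero, add_zero, h]) (e i x) := by
  subst h
  rw [cycBarShift_zero]
  rfl

end CycBar

namespace CircPartition

variable {Q : AtR} (C : CircPartition Q)

lemma lt_of_partIdx_lt {x y : ℝ} (h : C.partIdx x < C.partIdx y) : x < y :=
  C.ordered h _ (C.mem_partIdx x) _ (C.mem_partIdx y)

lemma partIdx_mono : Monotone C.partIdx := fun _ _ hxy =>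
  not_lt.mp fun h => (C.lt_of_partIdx_lt h).not_ge hxy

lemma partIdx_add_two_pi_mul (θ : ℝ) (n : ℤ) :
    C.partIdx (θ + 2 * Real.pi * n) = C.partIdx θ + n * C.N := by
  induction n using Int.induction_on with
  | zero => simp
  | succ n ih =>
    rw [show θ + 2 * Real.pi * (((n : ℤ) + 1 : ℤ) : ℝ)
        = θ + 2 * Real.pi * ((n : ℤ) : ℝ) + 2 * Real.pi by
      push_cast; ring, C.partIdx_shift, ih]
    ring
  | pred n ih =>
    have h := C.partIdx_shift (θ + 2 * Real.pi * ((-n - 1 : ℤ) : ℝ))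
    rw [show θ + 2 * Real.pi * ((-n - 1 : ℤ) : ℝ) + 2 * Real.pi = θ + 2 * Real.pi * (-n : ℤ) by
      push_cast; ring, ih] at h
    linarith

lemma partZ_add_sub (θ φ : ℝ) :
    C.partZ θ + ((C.partIdx φ - C.partIdx θ : ℤ) : ZMod C.N) = C.partZ φ := by
  simp [partZ]

lemma partZ_add_two_pi_add_zero (θ : ℝ) :
    C.partZ (θ + 2 * Real.pi) + ((0 : ℤ) : ZMod C.N) = C.partZ θ := by
  rw [Int.cast_zero, add_zero, C.partZ_shift]

theorem covRel_induction {P : ∀ {θ φ : ℝ}, Q.covRel θ φ → Prop}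
    (adjacent : ∀ {θ φ : ℝ} (h : Q.covRel θ φ), |C.partIdx φ - C.partIdx θ| ≤ 1 → P h)
    (comp : ∀ {θ z φ : ℝ} (h₁ : Q.covRel θ z) (h₂ : Q.covRel z φ) (h : Q.covRel θ φ),
      z ∈ uIcc θ φ → P h₁ → P h₂ → P h)
    {θ φ : ℝ} (h : Q.covRel θ φ) : P h := by
  suffices key : ∀ n : ℕ, ∀ {θ φ : ℝ} (h : Q.covRel θ φ),
      (C.partIdx φ - C.partIdx θ).natAbs = n → P h from key _ h rfl
  intro n
  induction n with
  | zero => exact fun h hn => adjacent h (by rw [Int.abs_eq_natAbs]; omega)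
  | succ n ih =>
    intro θ φ h hn
    by_cases hn1 : n = 0
    · exact adjacent h (by rw [Int.abs_eq_natAbs]; omega)
    rcases le_total θ φ with hle | hle
    · have hmono := C.partIdx_mono hle
      obtain ⟨z, hz⟩ := C.nonempty (C.partIdx θ + 1)
      have hpz := C.partIdx_eq hz
      have hθz := C.lt_of_partIdx_lt (x := θ) (y := z) (by omega)
      have hzφ := C.lt_of_partIdx_lt (x := z) (y := φ) (by omega)
      have hzm : z ∈ uIcc θ φ := by rw [uIcc_of_le hle]; exact ⟨hθz.le, hzφ.le⟩
      obtain ⟨h₁, h₂⟩ := AtR.covRel_split h hzm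
      exact comp h₁ h₂ h hzm (adjacent h₁ (by rw [hpz]; simp)) (ih h₂ (by omega))
    · have hmono := C.partIdx_mono hle
      obtain ⟨z, hz⟩ := C.nonempty (C.partIdx θ - 1)
      have hpz := C.partIdx_eq hz
      have hzθ := C.lt_of_partIdx_lt (x := z) (y := θ) (by omega)
      have hφz := C.lt_of_partIdx_lt (x := φ) (y := z) (by omega)
      have hzm : z ∈ uIcc θ φ := by rw [uIcc_of_ge hle]; exact ⟨hφz.le, hzθ.le⟩
      obtain ⟨h₁, h₂⟩ := AtR.covRel_split h hzm
      exact comp h₁ h₂ h hzm (adjacent h₁ (by rw [hpz]; simp)) (ih h₂ (by omega))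

def barSet (a b : ℤ) : Set ℝ := C.partIdx ⁻¹' Icc a b

lemma barSet_nonempty {a b : ℤ} (hab : a ≤ b) : (C.barSet a b).Nonempty :=
  (C.nonempty a).imp fun _ hx => by simp [barSet, C.partIdx_eq hx, hab]

lemma isBounded_barSet (a b : ℤ) : Bornology.IsBounded (C.barSet a b) := by
  obtain ⟨p, hp⟩ := C.nonempty (a - 1)
  obtain ⟨q, hq⟩ := C.nonempty (b + 1)
  refine (Metric.isBounded_Icc p q).subset fun x hx => ?_
  simp only [barSet, mem_preimage, mem_Icc] at hx
  exact ⟨(C.lt_of_partIdx_lt (by rw [C.partIdx_eq hp]; omega)).le,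
    (C.lt_of_partIdx_lt (by rw [C.partIdx_eq hq]; omega)).le⟩

lemma ordConnected_barSet (a b : ℤ) : (C.barSet a b).OrdConnected :=
  ordConnected_Icc.preimage_mono C.partIdx_mono

lemma partIdx_barIdx {I : Set ℝ} {θ : ℝ} (β : barIdx I θ) :
    ∃ n : ℤ, β.1 = θ + 2 * Real.pi * n ∧ C.partIdx β.1 = C.partIdx θ + n * C.N := by
  obtain ⟨n, hn⟩ := β.2.2
  exact ⟨n, hn, by rw [hn, C.partIdx_add_two_pi_mul]⟩

lemma partIdx_barIdx_sub_add {I : Set ℝ} {θ : ℝ} (β : barIdx I θ) (φ : ℝ) :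
    C.partIdx (β.1 - θ + φ) = C.partIdx β.1 + (C.partIdx φ - C.partIdx θ) := by
  obtain ⟨n, hn⟩ := β.2.2
  rw [hn, show θ + 2 * Real.pi * n - θ + φ = φ + 2 * Real.pi * n by ring,
    C.partIdx_add_two_pi_mul, C.partIdx_add_two_pi_mul]
  ring

lemma N_ne_zero : C.N ≠ 0 := by
  have := C.hN; omega

def barIdxLabel (a b : ℤ) (θ : ℝ) (β : barIdx (C.barSet a b) θ) :
    cycIdx C.N a b (C.partZ θ) :=
  ⟨C.partIdx β.1, β.2.1, by
    obtain ⟨n, -, hpβ⟩ := C.partIdx_barIdx β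
    simp [partZ, hpβ]⟩

lemma barIdxLabel_bijective (a b : ℤ) (θ : ℝ) : Function.Bijective (C.barIdxLabel a b θ) := by
  constructor
  · intro β β' hββ'
    obtain ⟨n, hn, hpβ⟩ := C.partIdx_barIdx β
    obtain ⟨n', hn', hpβ'⟩ := C.partIdx_barIdx β'
    have hval : C.partIdx β.1 = C.partIdx β'.1 := congrArg Subtype.val hββ'
    rw [hpβ, hpβ'] at hval
    have hnn' : n = n' :=
      mul_right_cancel₀ (by exact_mod_cast C.N_ne_zero) (add_left_cancel hval)
    exact Subtype.ext (by rw [hn, hn', hnn'])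
  · intro c
    obtain ⟨q, hq⟩ := (ZMod.intCast_eq_intCast_iff_dvd_sub _ _ _).mp c.2.2
    have hpβ : C.partIdx (θ + 2 * Real.pi * (-q : ℤ)) = c.1 := by
      rw [C.partIdx_add_two_pi_mul]; linarith
    exact ⟨⟨_, by simp only [barSet, mem_preimage, hpβ, c.2.1], -q, rfl⟩, Subtype.ext hpβ⟩

def barIdxEquiv (a b : ℤ) (θ : ℝ) : barIdx (C.barSet a b) θ ≃ cycIdx C.N a b (C.partZ θ) :=
  Equiv.ofBijective _ (C.barIdxLabel_bijective a b θ)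

@[simp]
lemma barIdxEquiv_apply_coe (a b : ℤ) (θ : ℝ) (β : barIdx (C.barSet a b) θ) :
    (C.barIdxEquiv a b θ β).1 = C.partIdx β.1 := rfl

section

variable (a b : ℤ)

lemma barIdxEquiv_barMapHom (θ φ : ℝ) (u : barIdx (C.barSet a b) θ →₀ k) :
    Finsupp.domLCongr (R := k) (C.barIdxEquiv a b φ) (barMapHom k (C.barSet a b) θ φ u) =
      cycBarShift k a b (C.partIdx φ - C.partIdx θ) (C.partZ_add_sub θ φ)
        (Finsupp.domLCongr (R := k) (C.barIdxEquiv a b θ) u) := by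
  suffices (Finsupp.domLCongr (R := k) (C.barIdxEquiv a b φ)).toLinearMap ∘ₗ
      barMapHom k (C.barSet a b) θ φ = cycBarShift k a b _ (C.partZ_add_sub θ φ) ∘ₗ
        (Finsupp.domLCongr (R := k) (C.barIdxEquiv a b θ)).toLinearMap from LinearMap.congr_fun this u
  refine Finsupp.lhom_ext fun β x => ?_
  simp only [LinearMap.comp_apply, LinearEquiv.coe_coe, Finsupp.domLCongr_single]
  by_cases hβ : β.1 - θ + φ ∈ C.barSet a b
  · obtain ⟨β', hβ'⟩ := β.exists_sub_add hβ
    rw [barMapHom_single hβ', Finsupp.domLCongr_single,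
      cycBarShift_single (m' := C.barIdxEquiv a b φ β') _
        (by simp only [barIdxEquiv_apply_coe, hβ', partIdx_barIdx_sub_add])]
  · rw [barMapHom_single_eq_zero hβ, map_zero, cycBarShift_single_eq_zero _
      (by rwa [barIdxEquiv_apply_coe, ← partIdx_barIdx_sub_add])]

lemma barIdxEquiv_barShift (θ : ℝ) (u : barIdx (C.barSet a b) (θ + 2 * Real.pi) →₀ k) :
    Finsupp.domLCongr (R := k) (C.barIdxEquiv a b θ)
        (Finsupp.equivMapDomain (barShift (C.barSet a b) θ) u) =
      cycBarShift k a b 0 (C.partZ_add_two_pi_add_zero θ)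
        (Finsupp.domLCongr (R := k) (C.barIdxEquiv a b (θ + 2 * Real.pi)) u) := by
  rw [← Finsupp.domCongr_apply, ← Finsupp.domLCongr_apply (R := k)]
  suffices (Finsupp.domLCongr (R := k) (C.barIdxEquiv a b θ)).toLinearMap ∘ₗ
      (Finsupp.domLCongr (R := k) (barShift (C.barSet a b) θ)).toLinearMap =
        cycBarShift k a b 0 (C.partZ_add_two_pi_add_zero θ) ∘ₗ
          (Finsupp.domLCongr (R := k) (C.barIdxEquiv a b (θ + 2 * Real.pi))).toLinearMap from
    LinearMap.congr_fun this u
  refine Finsupp.lhom_ext fun β x => ?_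
  simp only [LinearMap.comp_apply, LinearEquiv.coe_coe, Finsupp.domLCongr_single]
  exact (cycBarShift_single _ (by rw [add_zero]; rfl) x).symm

end

section

variable {a b : ℤ}

def IntertwinesShift (U : SRep k Q)
    (F : ∀ θ, U.obj θ ≃ₗ[k] (cycIdx C.N a b (C.partZ θ) →₀ k)) {θ φ : ℝ}
    (h : Q.covRel θ φ) : Prop :=
  ∀ v, F φ (U.map h v) =
    cycBarShift k a b (C.partIdx φ - C.partIdx θ) (C.partZ_add_sub θ φ) (F θ v)

variable {C}

lemma intertwinesShift_of_adjacent {U : SRep k Q}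
    {F : ∀ θ, U.obj θ ≃ₗ[k] (cycIdx C.N a b (C.partZ θ) →₀ k)}
    (hadj : ∀ {θ φ : ℝ} (h : Q.covRel θ φ), |C.partIdx φ - C.partIdx θ| ≤ 1 →
      C.IntertwinesShift U F h)
    {θ φ : ℝ} (h : Q.covRel θ φ) : C.IntertwinesShift U F h := by
  refine C.covRel_induction hadj (fun {θ z φ} h₁ h₂ h hz hF₁ hF₂ v => ?_) h
  have hsign : C.partIdx θ ≤ C.partIdx z ∧ C.partIdx z ≤ C.partIdx φ ∨
      C.partIdx φ ≤ C.partIdx z ∧ C.partIdx z ≤ C.partIdx θ :=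
    (mem_uIcc.mp hz).imp (And.imp (C.partIdx_mono ·) (C.partIdx_mono ·))
      (And.imp (C.partIdx_mono ·) (C.partIdx_mono ·))
  rw [LinearMap.congr_fun (U.map_comp h₁ h₂ h) v, LinearMap.comp_apply, hF₂, hF₁,
    cycBarShift_cycBarShift (C.partZ_add_sub θ z) (C.partZ_add_sub z φ) (C.partZ_add_sub θ φ)
      (by ring) (by omega)]

lemma barOn_barSet_of_intertwinesShift (hab : a ≤ b) {U : SRep k Q}
    (F : ∀ θ, U.obj θ ≃ₗ[k] (cycIdx C.N a b (C.partZ θ) →₀ k))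
    (hmap : ∀ {θ φ : ℝ} (h : Q.covRel θ φ), C.IntertwinesShift U F h)
    (hper : ∀ θ v, F θ (U.per θ v) =
      cycBarShift k a b 0 (C.partZ_add_two_pi_add_zero θ) (F (θ + 2 * Real.pi) v)) :
    U.BarOn (C.barSet a b) := by
  refine ⟨C.barSet_nonempty hab, C.isBounded_barSet a b, C.ordConnected_barSet a b,
    fun θ => (F θ).trans (Finsupp.domLCongr (C.barIdxEquiv a b θ)).symm,
    fun {θ φ} h v => ?_, fun θ v => ?_⟩
  · simp only [LinearEquiv.trans_apply, LinearEquiv.symm_apply_eq, hmap h v,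
      C.barIdxEquiv_barMapHom, LinearEquiv.apply_symm_apply]
  · simp only [LinearEquiv.trans_apply, LinearEquiv.symm_apply_eq, hper θ v,
      C.barIdxEquiv_barShift, LinearEquiv.apply_symm_apply]

end

end CircPartition

namespace SRep.PushdownOf

variable {Q : AtR} {a b : ℤ}

lemma exists_adjacent_intertwinesShift {C : CircPartition Q} {o : ZMod C.N → Bool}
    (hup : ∀ j : ℤ, C.dirUp j → o j = true) (hdown : ∀ j : ℤ, C.dirDown j → o j = false)
    {M : CycRep k C.N o} (hbar : M.BarOn a b) {U : SRep k Q} (hU : U.PushdownOf C o M) :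
    ∃ F : ∀ θ, U.obj θ ≃ₗ[k] (cycIdx C.N a b (C.partZ θ) →₀ k),
      (∀ {θ φ : ℝ} (h : Q.covRel θ φ), |C.partIdx φ - C.partIdx θ| ≤ 1 →
        C.IntertwinesShift U F h) ∧
      ∀ θ v, F θ (U.per θ v) =
        cycBarShift k a b 0 (C.partZ_add_two_pi_add_zero θ) (F (θ + 2 * Real.pi) v) := by
  obtain ⟨-, eB, hBup, hBdown⟩ := hbar
  obtain ⟨eU, hsame, hcross_up, hcross_down, hper⟩ := hU
  refine ⟨fun θ => (eU θ).trans (eB (C.partZ θ)), fun {θ φ} h hadj v => ?_, fun θ v => ?_⟩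
  · simp only [LinearEquiv.trans_apply]
    rcases (by rw [abs_le] at hadj; omega :
        C.partIdx θ = C.partIdx φ + 1 ∨ C.partIdx θ = C.partIdx φ ∨
          C.partIdx φ = C.partIdx θ + 1) with hp | hp | hp
    · have hf : o (C.partZ φ) = false :=
        hdown _ ⟨θ, hp ▸ C.mem_partIdx θ, φ, C.mem_partIdx φ, h⟩
      rw [hcross_down h hp hf, hBdown, CycRep.apply_castM, cycBarDown_eq]
      exact cycBarShift_cycBarShift _ _ _ (by omega) (by omega) _
    · rw [hsame h hp, CycRep.apply_castM]
      exact LinearMap.congr_fun (cycBarShift_congr (by omega) _ _) _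
    · have ht : o (C.partZ θ) = true :=
        hup _ ⟨θ, C.mem_partIdx θ, φ, hp ▸ C.mem_partIdx φ, h⟩
      rw [hcross_up h hp ht, CycRep.apply_castM, hBup, cycBarUp_eq]
      exact cycBarShift_cycBarShift _ _ _ (by omega) (by omega) _
  · simp only [LinearEquiv.trans_apply]
    rw [hper, CycRep.apply_castM]

end SRep.PushdownOf

/-- If the auxiliary quiver of the partition `C` is the `Ã_{N-1}` quiver with
orientation `o` and `M` is a bar representation of it, then its push down is a
bar of the continuous quiver. -/
theorem pushdown_bar {k : Type} [Field k] {Q : AtR} (C : CircPartition Q)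
    (o : ZMod C.N → Bool)
    (ho : ∀ j : ℤ, ((o (j : ZMod C.N) = true) ↔ C.dirUp j) ∧
      ((o (j : ZMod C.N) = false) ↔ C.dirDown j))
    (M : CycRep k C.N o) (a b : ℤ) (hbar : CycRep.BarOn a b M)
    (U : SRep k Q) (hU : SRep.PushdownOf C o M U) : SRep.IsBar U := by
  obtain ⟨F, hadj, hper⟩ :=
    hU.exists_adjacent_intertwinesShift (fun j => (ho j).1.mpr) (fun j => (ho j).2.mpr) hbar
  exact ⟨_, CircPartition.barOn_barSet_of_intertwinesShift hbar.1 F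
    (CircPartition.intertwinesShift_of_adjacent hadj) hper⟩
end
end
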